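/- arXiv:2512.23075 — 3 statements merged into one kernel-verified Lean document; each statement's English description precedes it below -/
import Mathlib

section
/- Adaptive error bound: if the reward takes values in [0,1], then |Error| ≤ min{ (4/3)·T^{3/2}·D_KL^{tok,max}, 2·T·√( D_KL^{tok,max} · D_KL^{seq} ) }, where D_KL^{tok,max} = max over steps t and contexts c of D_KL(π_roll(·|c) ‖ π_θ(·|c)), D_KL^{seq} = E_{x∼P}[ D_KL(P^{π_roll}(·|x) ‖ P^{π_θ}(·|x)) ], and D_KL(p‖q) = Σ p log(p/q). -/
open Finset

section Setup

variable {X V : Type*}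

/-- A policy assigns to each context `(x, y_{<t})` (a prompt together with a token
prefix of length `t`) a strictly positive probability distribution on the next token. -/
structure Policy (X V : Type*) [Fintype V] where
  prob : ∀ t : ℕ, X × (Fin t → V) → V → ℝ
  pos : ∀ t c v, 0 < prob t c v
  sum_one : ∀ t c, ∑ v, prob t c v = 1

variable [Fintype X] [Fintype V]

/-- Trajectory probability `P^π(y | x) = ∏_t π(y_t | x, y_{<t})`. -/
noncomputable def traj (π : Policy X V) (T : ℕ) (x : X) (y : Fin T → V) : ℝ :=
  ∏ t : Fin T, π.prob t.1 (x, fun s : Fin t.1 => y (Fin.castLE t.isLt.le s)) (y t)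

/-- Context visitation mass at prefix length `k`: this is the paper's `d_{k+1}^π`,
a distribution on pairs (prompt, prefix of `k` tokens). -/
noncomputable def visit (π : Policy X V) (P : X → ℝ) (k : ℕ) (c : X × (Fin k → V)) : ℝ :=
  P c.1 * ∏ s : Fin k, π.prob s.1 (c.1, fun u : Fin s.1 => c.2 (Fin.castLE s.isLt.le u)) (c.2 s)

/-- Total variation distance `½ ∑ |p - q|`. -/
noncomputable def tvDist {α : Type*} [Fintype α] (p q : α → ℝ) : ℝ :=
  (∑ a, |p a - q a|) / 2

/-- KL divergence `∑ p log (p/q)`. -/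
noncomputable def klDiv {α : Type*} [Fintype α] (p q : α → ℝ) : ℝ :=
  ∑ a, p a * Real.log (p a / q a)

/-- The objective `J(π) = E_{x∼P} E_{y∼P^π(·|x)}[R(x,y)]`. -/
noncomputable def Jval (P : X → ℝ) (T : ℕ) (R : X → (Fin T → V) → ℝ) (π : Policy X V) : ℝ :=
  ∑ x, P x * ∑ y : Fin T → V, traj π T x y * R x y

/-- `Q^π(c, v)`: conditional expectation of the reward under continuation by `π`,
given context `c` (of length `k`) and next token `v`. -/
noncomputable def Qval (T : ℕ) (R : X → (Fin T → V) → ℝ) (π : Policy X V)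
    (k : ℕ) (hk : k < T) (c : X × (Fin k → V)) (v : V) : ℝ := by
  classical
  exact ∑ y : Fin T → V,
    if (∀ s : Fin k, y (Fin.castLE hk.le s) = c.2 s) ∧ y ⟨k, hk⟩ = v then
      (∏ s : Fin T, if k < s.1 then
          π.prob s.1 (c.1, fun u : Fin s.1 => y (Fin.castLE s.isLt.le u)) (y s)
        else 1) * R c.1 y
    else 0

/-- `V^π(c) = E_{v ∼ π(·|c)}[Q^π(c, v)]`. -/
noncomputable def Vval (T : ℕ) (R : X → (Fin T → V) → ℝ) (π : Policy X V)
    (k : ℕ) (hk : k < T) (c : X × (Fin k → V)) : ℝ :=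
  ∑ v, π.prob k c v * Qval T R π k hk c v

/-- Per-step advantage `A_t(c, v) = Q^{π_roll}(c,v) - V^{π_roll}(c)`. -/
noncomputable def Aval (T : ℕ) (R : X → (Fin T → V) → ℝ) (πroll : Policy X V)
    (k : ℕ) (hk : k < T) (c : X × (Fin k → V)) (v : V) : ℝ :=
  Qval T R πroll k hk c v - Vval T R πroll k hk c

/-- `g_t(c) = E_{v ∼ π_θ(·|c)}[A_t(c, v)]`. -/
noncomputable def gval (T : ℕ) (R : X → (Fin T → V) → ℝ) (πroll πθ : Policy X V)
    (k : ℕ) (hk : k < T) (c : X × (Fin k → V)) : ℝ :=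
  ∑ v, πθ.prob k c v * Aval T R πroll k hk c v

/-- Surrogate objective `L = ∑_{t=1}^T E_{c ∼ d_t^{π_roll}}[g_t(c)]`. -/
noncomputable def surrogate (P : X → ℝ) (T : ℕ) (R : X → (Fin T → V) → ℝ)
    (πroll πθ : Policy X V) : ℝ :=
  ∑ k : Fin T, ∑ c : X × (Fin k.1 → V), visit πroll P k.1 c * gval T R πroll πθ k.1 k.isLt c

/-- Approximation error `Error = J(π_θ) - J(π_roll) - L`. -/
noncomputable def errVal (P : X → ℝ) (T : ℕ) (R : X → (Fin T → V) → ℝ)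
    (πroll πθ : Policy X V) : ℝ :=
  Jval P T R πθ - Jval P T R πroll - surrogate P T R πroll πθ

/-- Sequence-level KL divergence `D_KL^seq = E_{x∼P}[D_KL(P^{π_roll}(·|x) ‖ P^{π_θ}(·|x))]`. -/
noncomputable def seqKL (P : X → ℝ) (T : ℕ) (πroll πθ : Policy X V) : ℝ :=
  ∑ x, P x * klDiv (fun y : Fin T → V => traj πroll T x y) (fun y => traj πθ T x y)

end Setup


namespace PfAux
open Finset

lemma sinh_le_mul_cosh {t : ℝ} (ht : 0 ≤ t) : Real.sinh t ≤ t * Real.cosh t := by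
  have key : MonotoneOn (fun u : ℝ => u * Real.cosh u - Real.sinh u) (Set.Ici 0) := by
    have hd : ∀ u : ℝ, HasDerivAt (fun u : ℝ => u * Real.cosh u - Real.sinh u)
        (u * Real.sinh u) u := by
      intro u
      have h1 : HasDerivAt (fun u : ℝ => u * Real.cosh u)
          (1 * Real.cosh u + u * Real.sinh u) u :=
        (hasDerivAt_id u).mul (Real.hasDerivAt_cosh u)
      have h2 := h1.sub (Real.hasDerivAt_sinh u)
      rw [show u * Real.sinh u = 1 * Real.cosh u + u * Real.sinh u - Real.cosh u by ring]; exact h2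
    apply monotoneOn_of_deriv_nonneg (convex_Ici 0)
    · exact (Continuous.continuousOn (by continuity))
    · intro u hu
      exact ((hd u).differentiableAt).differentiableWithinAt
    · intro u hu
      rw [interior_Ici] at hu
      rw [(hd u).deriv]
      exact mul_nonneg (le_of_lt hu) (Real.sinh_nonneg_iff.2 (le_of_lt hu))
  have := key (Set.self_mem_Ici) (Set.mem_Ici.2 ht) ht
  simpa using this

/-- Pointwise Pinsker ingredient. -/
lemma pointwise_pinsker {p q : ℝ} (hp : 0 < p) (hq : 0 < q) :
    (p - q) ^ 2 ≤ 2 * max p q * (p * Real.log (p / q) - p + q) := by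
  have hpq : p / q > 0 := div_pos hp hq
  set u : ℝ := Real.log (p / q) with hu
  have hpe : p = q * Real.exp u := by
    rw [hu, Real.exp_log hpq]; field_simp
  rcases le_total p q with h | h
  · -- u ≤ 0, max = q
    have hmax : max p q = q := max_eq_right h
    have hu0 : u ≤ 0 := Real.log_nonpos (le_of_lt hpq) (by rw [div_le_one hq]; exact h)
    have hsinh : Real.sinh u ≤ u := Real.sinh_le_self_iff.2 hu0
    rw [Real.sinh_eq] at hsinh
    have hE := Real.exp_pos u
    have hEneg : Real.exp (-u) = 1 / Real.exp u := by
      rw [Real.exp_neg]; exact inv_eq_one_div _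
    rw [hEneg] at hsinh
    have hinv : Real.exp u * (1 / Real.exp u) = 1 := by field_simp
    have key : Real.exp u * Real.exp u - 1 ≤ 2 * u * Real.exp u := by
      nlinarith [mul_le_mul_of_nonneg_right hsinh (le_of_lt hE), hinv]
    rw [hmax, hpe]
    nlinarith [key, mul_pos hq hq, sq_nonneg (Real.exp u - 1)]
  · -- q ≤ p, u ≥ 0, max = p
    have hmax : max p q = p := max_eq_left h
    have hu0 : 0 ≤ u := Real.log_nonneg (by rw [le_div_iff₀ hq]; simpa using h)
    have ht : (0:ℝ) ≤ u / 2 := by linarith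
    have hsinh := sinh_le_mul_cosh ht
    rw [Real.sinh_eq, Real.cosh_eq] at hsinh
    have hE := Real.exp_pos (u/2)
    have key : Real.exp (u/2) * Real.exp (u/2) - 1 ≤ u / 2 * (Real.exp (u/2) * Real.exp (u/2) + 1) := by
      have hme : Real.exp (-(u/2)) * Real.exp (u/2) = 1 := by
        rw [← Real.exp_add]; norm_num
      nlinarith [mul_le_mul_of_nonneg_right hsinh (le_of_lt hE), hme]
    have hEu : Real.exp u = Real.exp (u/2) * Real.exp (u/2) := by
      rw [← Real.exp_add]; norm_num
    set E := Real.exp u with hEdef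
    have hE1 : 1 ≤ E := Real.one_le_exp hu0
    have hEpos : 0 < E := Real.exp_pos u
    rw [← hEu] at key
    have h4 : 2*(E-1) ≤ u*(E+1) := by linarith
    have h5 : (2*(E-1))*(2*E*E) ≤ (u*(E+1))*(2*E*E) :=
      mul_le_mul_of_nonneg_right h4 (by positivity)
    have hcube : 0 ≤ (E-1)*(E-1)*(E-1) :=
      mul_nonneg (mul_nonneg (by linarith) (by linarith)) (by linarith)
    have h3 : (E-1)^2 ≤ 2*E*(u*E - E + 1) := by nlinarith [h5, hcube, hEpos, hE1]
    have hq2 : (0:ℝ) < q * q := mul_pos hq hq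
    rw [hmax, hpe]
    nlinarith [mul_le_mul_of_nonneg_left h3 (le_of_lt hq2)]

variable {α : Type*} [Fintype α]

lemma chi_le_klDiv {p q : α → ℝ} (hp : ∀ a, 0 < p a) (hq : ∀ a, 0 < q a)
    (hps : ∑ a, p a = 1) (hqs : ∑ a, q a = 1) :
    ∑ a, (p a - q a) ^ 2 / max (p a) (q a) ≤ 2 * klDiv p q := by
  have hphi : ∑ a, (p a - q a) ^ 2 / max (p a) (q a)
      ≤ ∑ a, 2 * (p a * Real.log (p a / q a) - p a + q a) := by
    apply Finset.sum_le_sum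
    intro a _
    have hm : 0 < max (p a) (q a) := lt_max_of_lt_left (hp a)
    rw [div_le_iff₀ hm]
    calc (p a - q a)^2 ≤ 2 * max (p a) (q a) * (p a * Real.log (p a / q a) - p a + q a) :=
          pointwise_pinsker (hp a) (hq a)
      _ = 2 * (p a * Real.log (p a / q a) - p a + q a) * max (p a) (q a) := by ring
  calc ∑ a, (p a - q a) ^ 2 / max (p a) (q a)
      ≤ ∑ a, 2 * (p a * Real.log (p a / q a) - p a + q a) := hphi
    _ = 2 * klDiv p q := by
        have expand : ∀ a ∈ Finset.univ, 2 * (p a * Real.log (p a / q a) - p a + q a)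
            = 2 * (p a * Real.log (p a / q a)) + 2 * (q a - p a) := by intro a _; ring
        rw [Finset.sum_congr rfl expand, Finset.sum_add_distrib, ← Finset.mul_sum,
          ← Finset.mul_sum, Finset.sum_sub_distrib, hps, hqs, klDiv]
        ring

lemma klDiv_nonneg {p q : α → ℝ} (hp : ∀ a, 0 < p a) (hq : ∀ a, 0 < q a)
    (hps : ∑ a, p a = 1) (hqs : ∑ a, q a = 1) : 0 ≤ klDiv p q := by
  have h := chi_le_klDiv hp hq hps hqs
  have h0 : (0:ℝ) ≤ ∑ a, (p a - q a) ^ 2 / max (p a) (q a) := by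
    apply Finset.sum_nonneg
    intro a _
    exact div_nonneg (sq_nonneg _) (le_of_lt (lt_max_of_lt_left (hp a)))
  linarith

lemma pinsker {p q : α → ℝ} (hp : ∀ a, 0 < p a) (hq : ∀ a, 0 < q a)
    (hps : ∑ a, p a = 1) (hqs : ∑ a, q a = 1) :
    ∑ a, |p a - q a| ≤ 2 * Real.sqrt (klDiv p q) := by
  have hKL := klDiv_nonneg hp hq hps hqs
  have hm : ∀ a, (0:ℝ) < max (p a) (q a) := fun a => lt_max_of_lt_left (hp a)
  have hCS := Finset.sum_mul_sq_le_sq_mul_sq Finset.univ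
    (fun a => |p a - q a| / Real.sqrt (max (p a) (q a)))
    (fun a => Real.sqrt (max (p a) (q a)))
  have hfg : ∀ a ∈ Finset.univ, |p a - q a| / Real.sqrt (max (p a) (q a)) * Real.sqrt (max (p a) (q a)) = |p a - q a| := by
    intro a _
    exact div_mul_cancel₀ _ (ne_of_gt (Real.sqrt_pos.2 (hm a)))
  have hf2 : ∀ a ∈ Finset.univ, (|p a - q a| / Real.sqrt (max (p a) (q a)))^2 = (p a - q a)^2 / max (p a) (q a) := by
    intro a _
    rw [div_pow, sq_abs, Real.sq_sqrt (le_of_lt (hm a))]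
  have hg2 : ∀ a ∈ Finset.univ, (Real.sqrt (max (p a) (q a)))^2 = max (p a) (q a) := by
    intro a _; exact Real.sq_sqrt (le_of_lt (hm a))
  rw [Finset.sum_congr rfl hfg, Finset.sum_congr rfl hf2, Finset.sum_congr rfl hg2] at hCS
  have hmax_sum : ∑ a, max (p a) (q a) ≤ 2 := by
    calc ∑ a, max (p a) (q a) ≤ ∑ a, (p a + q a) := by
          apply Finset.sum_le_sum; intro a _
          exact max_le (by linarith [(hq a).le]) (by linarith [(hp a).le])
      _ = 2 := by rw [Finset.sum_add_distrib, hps, hqs]; norm_num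
  have hchi := chi_le_klDiv hp hq hps hqs
  have hchi0 : (0:ℝ) ≤ ∑ a, (p a - q a) ^ 2 / max (p a) (q a) := by
    apply Finset.sum_nonneg; intro a _
    exact div_nonneg (sq_nonneg _) (le_of_lt (hm a))
  have hsq : (∑ a, |p a - q a|)^2 ≤ 4 * klDiv p q := by
    calc (∑ a, |p a - q a|)^2 ≤ (∑ a, (p a - q a)^2 / max (p a) (q a)) * (∑ a, max (p a) (q a)) := hCS
      _ ≤ (2 * klDiv p q) * 2 := by
          apply mul_le_mul hchi hmax_sum (Finset.sum_nonneg (fun a _ => le_of_lt (hm a)))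
          linarith
      _ = 4 * klDiv p q := by ring
  have hL1 : (0:ℝ) ≤ ∑ a, |p a - q a| := Finset.sum_nonneg (fun a _ => abs_nonneg _)
  have := Real.sqrt_le_sqrt hsq
  rw [Real.sqrt_sq hL1] at this
  calc ∑ a, |p a - q a| ≤ Real.sqrt (4 * klDiv p q) := this
    _ = 2 * Real.sqrt (klDiv p q) := by
        rw [Real.sqrt_mul (by norm_num : (0:ℝ) ≤ 4), show Real.sqrt 4 = 2 from by
          rw [show (4:ℝ) = 2^2 by norm_num, Real.sqrt_sq (by norm_num : (0:ℝ) ≤ 2)]]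

end PfAux
namespace PfAux
open Finset
open scoped Classical
set_option linter.unusedSectionVars false
set_option linter.unusedVariables false

variable {X V : Type*} [Fintype X] [Fintype V]

noncomputable def step (π : Policy X V) {T : ℕ} (x : X) (y : Fin T → V) (t : Fin T) : ℝ :=
  π.prob t.1 (x, fun u : Fin t.1 => y (Fin.castLE t.isLt.le u)) (y t)

lemma traj_eq (π : Policy X V) (T : ℕ) (x : X) (y : Fin T → V) :
    traj π T x y = ∏ t : Fin T, step π x y t := rfl

noncomputable def prefP (π : Policy X V) (k : ℕ) (x : X) (c : Fin k → V) : ℝ :=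
  ∏ s : Fin k, π.prob s.1 (x, fun u : Fin s.1 => c (Fin.castLE s.isLt.le u)) (c s)

lemma visit_eq (π : Policy X V) (P : X → ℝ) (k : ℕ) (c : X × (Fin k → V)) :
    visit π P k c = P c.1 * prefP π k c.1 c.2 := rfl

lemma step_pos (π : Policy X V) {T : ℕ} (x : X) (y : Fin T → V) (t : Fin T) :
    0 < step π x y t := π.pos _ _ _

lemma prefP_pos (π : Policy X V) (k : ℕ) (x : X) (c : Fin k → V) :
    0 < prefP π k x c := Finset.prod_pos (fun s _ => π.pos _ _ _)

lemma traj_pos (π : Policy X V) (T : ℕ) (x : X) (y : Fin T → V) :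
    0 < traj π T x y := Finset.prod_pos (fun s _ => π.pos _ _ _)

/-- Key marginalization: summing the tail product over trajectories with fixed prefix gives 1. -/
lemma tailsum (π : Policy X V) {T : ℕ} (x : X) :
    ∀ (n j : ℕ), j ≤ T → T - j = n → ∀ w : Fin T → V,
    ∑ y : Fin T → V, (if ∀ s : Fin T, s.1 < j → y s = w s
        then ∏ s : Fin T, (if j ≤ s.1 then step π x y s else 1) else 0) = 1 := by
  intro n
  induction n with
  | zero =>
    intro j hj hTj w
    have hjT : j = T := by omega
    have htr : (∑ y : Fin T → V, (if ∀ s : Fin T, s.1 < j → y s = w s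
        then ∏ s : Fin T, (if j ≤ s.1 then step π x y s else 1) else 0))
        = ∑ y : Fin T → V, (if y = w then (1:ℝ) else 0) := by
      apply Finset.sum_congr rfl; intro y _
      have h2 : (∀ s : Fin T, s.1 < j → y s = w s) ↔ y = w :=
        ⟨fun h => funext fun s => h s (by have := s.2; omega), fun h s _ => by rw [h]⟩
      by_cases h : y = w
      · rw [if_pos (h2.2 h), if_pos h, Finset.prod_eq_one]
        intro s _
        rw [if_neg (by have := s.2; omega)]
      · rw [if_neg (fun hc => h (h2.1 hc)), if_neg h]
    rw [htr]
    simp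
  | succ n ih =>
    intro j hj hTj w
    have hjT : j < T := by omega
    set jT : Fin T := ⟨j, hjT⟩ with hjTdef
    -- split the product at position j
    have hprod : ∀ y : Fin T → V, (∏ s : Fin T, (if j ≤ s.1 then step π x y s else 1))
        = step π x y jT * ∏ s : Fin T, (if j + 1 ≤ s.1 then step π x y s else 1) := by
      intro y
      rw [← Finset.mul_prod_erase Finset.univ
        (fun s => if j ≤ s.1 then step π x y s else 1) (Finset.mem_univ jT)]
      rw [← Finset.mul_prod_erase Finset.univ
        (fun s => if j + 1 ≤ s.1 then step π x y s else 1) (Finset.mem_univ jT)]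
      simp only [hjTdef]
      rw [if_pos (le_refl j), if_neg (by omega)]
      rw [one_mul]
      congr 1
      apply Finset.prod_congr rfl
      intro s hs
      have hne : s.1 ≠ j := by
        intro hc
        exact (Finset.ne_of_mem_erase hs) (Fin.ext hc)
      by_cases h : j + 1 ≤ s.1
      · rw [if_pos h, if_pos (by omega)]
      · rw [if_neg h, if_neg (by omega)]
    -- refiber over the value at position j
    have hrefib : ∀ (f : (Fin T → V) → ℝ),
        (∑ y : Fin T → V, f y) = ∑ v : V, ∑ y : Fin T → V, (if y jT = v then f y else 0) := by
      intro f
      rw [Finset.sum_comm]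
      apply Finset.sum_congr rfl
      intro y _
      simp
    set pj : V → ℝ := fun v => π.prob j (x, fun u : Fin j => w (Fin.castLE hjT.le u)) v with hpj
    have hvalne : ∀ s : Fin T, s.1 < j → s ≠ jT := by
      intro s hs hc
      rw [hc] at hs
      simp only [hjTdef] at hs
      omega
    have hCiff : ∀ (v : V) (y : Fin T → V),
        ((y jT = v) ∧ (∀ s : Fin T, s.1 < j → y s = w s)) ↔
        (∀ s : Fin T, s.1 < j + 1 → y s = Function.update w jT v s) := by
      intro v y
      constructor
      · rintro ⟨h1, h2⟩ s hs
        by_cases hsj : s.1 < j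
        · rw [Function.update_of_ne (hvalne s hsj)]
          exact h2 s hsj
        · have hs' : s = jT := Fin.ext (by simp only [hjTdef]; omega)
          rw [hs', Function.update_self]
          exact h1
      · intro h
        constructor
        · have := h jT (by simp only [hjTdef]; omega)
          rwa [Function.update_self] at this
        · intro s hs
          have := h s (by omega)
          rwa [Function.update_of_ne (hvalne s hs)] at this
    calc ∑ y : Fin T → V, (if ∀ s : Fin T, s.1 < j → y s = w s
            then ∏ s : Fin T, (if j ≤ s.1 then step π x y s else 1) else 0)
        = ∑ y : Fin T → V, (if ∀ s : Fin T, s.1 < j → y s = w s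
            then step π x y jT * ∏ s : Fin T, (if j + 1 ≤ s.1 then step π x y s else 1) else 0) := by
          apply Finset.sum_congr rfl; intro y _
          by_cases h : ∀ s : Fin T, s.1 < j → y s = w s
          · rw [if_pos h, if_pos h, hprod]
          · rw [if_neg h, if_neg h]
      _ = ∑ v : V, ∑ y : Fin T → V, (if y jT = v then
            (if ∀ s : Fin T, s.1 < j → y s = w s
            then step π x y jT * ∏ s : Fin T, (if j + 1 ≤ s.1 then step π x y s else 1) else 0) else 0) :=
          hrefib _
      _ = ∑ v : V, pj v * ∑ y : Fin T → V, (if ∀ s : Fin T, s.1 < j + 1 → y s = Function.update w jT v s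
            then ∏ s : Fin T, (if j + 1 ≤ s.1 then step π x y s else 1) else 0) := by
          apply Finset.sum_congr rfl; intro v _
          rw [Finset.mul_sum]
          apply Finset.sum_congr rfl; intro y _
          by_cases h1 : y jT = v
          · by_cases h2 : ∀ s : Fin T, s.1 < j → y s = w s
            · rw [if_pos h1, if_pos h2, if_pos ((hCiff v y).1 ⟨h1, h2⟩)]
              have hstep : step π x y jT = pj v := by
                have harg : (fun u : Fin j => y (Fin.castLE hjT.le u))
                    = fun u : Fin j => w (Fin.castLE hjT.le u) :=
                  funext fun u => h2 _ u.isLt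
                show π.prob j (x, fun u : Fin j => y (Fin.castLE hjT.le u)) (y jT) = pj v
                rw [harg, h1]
              rw [hstep]
            · rw [if_pos h1, if_neg h2, if_neg (fun hc => h2 ((hCiff v y).2 hc).2), mul_zero]
          · rw [if_neg h1, if_neg (fun hc => h1 ((hCiff v y).2 hc).1), mul_zero]
      _ = ∑ v : V, pj v * 1 := by
          apply Finset.sum_congr rfl; intro v _
          rw [ih (j+1) (by omega) (by omega) (Function.update w jT v)]
      _ = 1 := by
          simp only [mul_one, hpj]
          exact π.sum_one j _

end PfAux
namespace PfAux
open scoped Classical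
set_option linter.unusedSectionVars false
set_option linter.unusedVariables false
variable {X V : Type*} [Fintype X] [Fintype V]

lemma traj_sum [Nonempty V] (π : Policy X V) (T : ℕ) (x : X) :
    ∑ y : Fin T → V, traj π T x y = 1 := by
  have h := tailsum π x T 0 (by omega) (by omega) (Classical.arbitrary (Fin T → V))
  calc ∑ y : Fin T → V, traj π T x y
      = ∑ y : Fin T → V, (if ∀ s : Fin T, s.1 < 0 → y s = Classical.arbitrary (Fin T → V) s
          then ∏ s : Fin T, (if 0 ≤ s.1 then step π x y s else 1) else 0) := by
        apply Finset.sum_congr rfl; intro y _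
        rw [if_pos (fun s hs => absurd hs (by omega))]
        rw [traj_eq]
        apply Finset.prod_congr rfl; intro s _
        rw [if_pos (by omega)]
    _ = 1 := h

lemma prod_split {T : ℕ} (k : ℕ) (f : Fin T → ℝ) :
    (∏ s : Fin T, f s) = (∏ s : Fin T, if s.1 < k then f s else 1)
      * (∏ s : Fin T, if k ≤ s.1 then f s else 1) := by
  rw [← Finset.prod_filter, ← Finset.prod_filter,
    ← Finset.prod_filter_mul_prod_filter_not Finset.univ (fun s : Fin T => s.1 < k) f]
  congr 1
  apply Finset.prod_congr _ (fun _ _ => rfl)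
  apply Finset.filter_congr
  intro s _
  simp [not_lt]

lemma prod_lt_eq_pref {T k : ℕ} (hk : k ≤ T) (f : Fin T → ℝ) (g : Fin k → ℝ)
    (hfg : ∀ s : Fin k, f (Fin.castLE hk s) = g s) :
    (∏ s : Fin T, if s.1 < k then f s else 1) = ∏ s : Fin k, g s := by
  rw [← Finset.prod_filter]
  refine Finset.prod_bij' (fun (a : Fin T) (ha : a ∈ Finset.filter (fun s : Fin T => s.1 < k) Finset.univ)
    => (⟨a.1, (Finset.mem_filter.1 ha).2⟩ : Fin k))
    (fun (b : Fin k) (_ : b ∈ Finset.univ) => Fin.castLE hk b)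
    (fun a ha => Finset.mem_univ _)
    (fun b _ => Finset.mem_filter.2 ⟨Finset.mem_univ _, b.isLt⟩)
    (fun a ha => Fin.ext rfl) (fun b hb => Fin.ext rfl) ?_
  intro a ha
  exact hfg ⟨a.1, (Finset.mem_filter.1 ha).2⟩

lemma marg [Nonempty V] (π : Policy X V) {T : ℕ} (x : X) {k : ℕ} (hk : k ≤ T) (c : Fin k → V) :
    ∑ y : Fin T → V, (if ∀ s : Fin k, y (Fin.castLE hk s) = c s then traj π T x y else 0)
      = prefP π k x c := by
  classical
  set w : Fin T → V := fun s => if h : s.1 < k then c ⟨s.1, h⟩ else Classical.arbitrary V with hw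
  have hcond : ∀ y : Fin T → V,
      (∀ s : Fin k, y (Fin.castLE hk s) = c s) ↔ (∀ s : Fin T, s.1 < k → y s = w s) := by
    intro y
    constructor
    · intro h s hs
      have : y s = c ⟨s.1, hs⟩ := h ⟨s.1, hs⟩
      rw [this, hw]
      simp [hs]
    · intro h s
      have := h (Fin.castLE hk s) s.isLt
      rw [this, hw]
      simp
  have hstep : ∀ y : Fin T → V, (∀ s : Fin k, y (Fin.castLE hk s) = c s) →
      (∏ s : Fin T, if s.1 < k then step π x y s else 1) = prefP π k x c := by
    intro y hy
    apply prod_lt_eq_pref hk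
    intro s
    show π.prob s.1 (x, fun u : Fin s.1 => y (Fin.castLE (Nat.le_trans s.isLt.le hk) u)) (y (Fin.castLE hk s))
      = π.prob s.1 (x, fun u : Fin s.1 => c (Fin.castLE s.isLt.le u)) (c s)
    congr 1
    · congr 1
      funext u
      exact hy (Fin.castLE s.isLt.le u)
    · exact hy s
  calc ∑ y : Fin T → V, (if ∀ s : Fin k, y (Fin.castLE hk s) = c s then traj π T x y else 0)
      = ∑ y : Fin T → V, (if ∀ s : Fin T, s.1 < k → y s = w s
          then prefP π k x c * ∏ s : Fin T, (if k ≤ s.1 then step π x y s else 1) else 0) := by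
        apply Finset.sum_congr rfl; intro y _
        by_cases h : ∀ s : Fin k, y (Fin.castLE hk s) = c s
        · rw [if_pos h, if_pos ((hcond y).1 h), traj_eq, prod_split k, hstep y h]
        · rw [if_neg h, if_neg (fun hc => h ((hcond y).2 hc))]
    _ = prefP π k x c * ∑ y : Fin T → V, (if ∀ s : Fin T, s.1 < k → y s = w s
          then ∏ s : Fin T, (if k ≤ s.1 then step π x y s else 1) else 0) := by
        rw [Finset.mul_sum]
        apply Finset.sum_congr rfl; intro y _
        by_cases h : ∀ s : Fin T, s.1 < k → y s = w s
        · rw [if_pos h, if_pos h]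
        · rw [if_neg h, if_neg h, mul_zero]
    _ = prefP π k x c := by
        rw [tailsum π x (T - k) k hk rfl w, mul_one]

lemma collapse1 {T k : ℕ} (hk : k ≤ T) (f : (Fin T → V) → ℝ) :
    ∑ c : Fin k → V, ∑ y : Fin T → V,
      (if ∀ s : Fin k, y (Fin.castLE hk s) = c s then f y else 0) = ∑ y : Fin T → V, f y := by
  classical
  rw [Finset.sum_comm]
  apply Finset.sum_congr rfl; intro y _
  rw [Finset.sum_eq_single (fun s : Fin k => y (Fin.castLE hk s))]
  · rw [if_pos (fun s => rfl)]
  · intro c _ hc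
    rw [if_neg (fun h => hc (funext (fun s => (h s).symm)))]
  · intro h
    exact absurd (Finset.mem_univ _) h

lemma collapse2 {T k : ℕ} (hk : k < T) (f : (Fin k → V) → V → (Fin T → V) → ℝ) :
    ∑ c : Fin k → V, ∑ v : V, ∑ y : Fin T → V,
      (if (∀ s : Fin k, y (Fin.castLE hk.le s) = c s) ∧ y ⟨k, hk⟩ = v then f c v y else 0)
    = ∑ y : Fin T → V, f (fun s => y (Fin.castLE hk.le s)) (y ⟨k, hk⟩) y := by
  classical
  have h1 : ∀ c : Fin k → V, (∑ v : V, ∑ y : Fin T → V,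
      (if (∀ s : Fin k, y (Fin.castLE hk.le s) = c s) ∧ y ⟨k, hk⟩ = v then f c v y else 0))
      = ∑ y : Fin T → V, ∑ v : V,
      (if (∀ s : Fin k, y (Fin.castLE hk.le s) = c s) ∧ y ⟨k, hk⟩ = v then f c v y else 0) :=
    fun c => Finset.sum_comm
  rw [Finset.sum_congr rfl (fun c _ => h1 c), Finset.sum_comm]
  apply Finset.sum_congr rfl; intro y _
  rw [Finset.sum_eq_single (fun s : Fin k => y (Fin.castLE hk.le s))]
  · rw [Finset.sum_eq_single (y ⟨k, hk⟩)]
    · rw [if_pos ⟨fun s => rfl, rfl⟩]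
    · intro v _ hv
      rw [if_neg (fun h => hv h.2.symm)]
    · intro h; exact absurd (Finset.mem_univ _) h
  · intro c _ hc
    apply Finset.sum_eq_zero
    intro v _
    rw [if_neg (fun h => hc (funext (fun s => (h.1 s).symm)))]
  · intro h; exact absurd (Finset.mem_univ _) h

lemma prefP_sum [Nonempty V] (π : Policy X V) (k : ℕ) (x : X) :
    ∑ c : Fin k → V, prefP π k x c = 1 := by
  have h := collapse1 (le_refl k) (traj π k x)
  calc ∑ c : Fin k → V, prefP π k x c
      = ∑ c : Fin k → V, ∑ y : Fin k → V,
          (if ∀ s : Fin k, y (Fin.castLE (le_refl k) s) = c s then traj π k x y else 0) := by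
        apply Finset.sum_congr rfl; intro c _
        rw [marg π x (le_refl k) c]
    _ = ∑ y : Fin k → V, traj π k x y := h
    _ = 1 := traj_sum π k x

end PfAux
namespace PfAux
open scoped Classical
set_option linter.unusedSectionVars false
set_option linter.unusedVariables false
variable {X V : Type*} [Fintype X] [Fintype V]

def snocE (k : ℕ) (V : Type*) : ((Fin k → V) × V) ≃ (Fin (k+1) → V) where
  toFun p := Fin.snoc p.1 p.2
  invFun c := (Fin.init c, c (Fin.last k))
  left_inv p := by
    ext
    · simp [Fin.init_snoc]
    · simp [Fin.snoc_last]
  right_inv c := Fin.snoc_init_self c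

lemma snoc_val {k : ℕ} (c : Fin k → V) (v : V) (i : Fin (k+1)) :
    (Fin.snoc c v : Fin (k+1) → V) i = if h : i.1 < k then c ⟨i.1, h⟩ else v := by
  induction i using Fin.lastCases with
  | last =>
    rw [Fin.snoc_last, dif_neg (by simp)]
  | cast i =>
    rw [Fin.snoc_castSucc, dif_pos (by simpa using i.isLt)]
    rfl

lemma snoc_lt {k : ℕ} (c : Fin k → V) (v : V) (i : Fin (k+1)) (h : i.1 < k) :
    (Fin.snoc c v : Fin (k+1) → V) i = c ⟨i.1, h⟩ := by rw [snoc_val, dif_pos h]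

lemma snoc_last' {k : ℕ} (c : Fin k → V) (v : V) (i : Fin (k+1)) (h : ¬ i.1 < k) :
    (Fin.snoc c v : Fin (k+1) → V) i = v := by rw [snoc_val, dif_neg h]

lemma prefP_snoc (π : Policy X V) (k : ℕ) (x : X) (c : Fin k → V) (v : V) :
    prefP π (k+1) x (Fin.snoc c v) = prefP π k x c * π.prob k (x, c) v := by
  rw [prefP, Fin.prod_univ_castSucc]
  have hcast : ∀ s : Fin k,
      π.prob (Fin.castSucc s).1 (x, fun u : Fin (Fin.castSucc s).1 =>
        (Fin.snoc c v : Fin (k+1) → V) (Fin.castLE (Fin.castSucc s).isLt.le u)) ((Fin.snoc c v : Fin (k+1) → V) (Fin.castSucc s))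
      = π.prob s.1 (x, fun u : Fin s.1 => c (Fin.castLE s.isLt.le u)) (c s) := by
    intro s
    have harg : (fun u : Fin s.1 => (Fin.snoc c v : Fin (k+1) → V) (Fin.castLE (Fin.castSucc s).isLt.le u))
        = (fun u : Fin s.1 => c (Fin.castLE s.isLt.le u)) := by
      funext u
      exact snoc_lt c v _ (by have h1 := u.isLt; have h2 := s.isLt; exact lt_of_lt_of_le h1 (le_of_lt h2))
    have htok : (Fin.snoc c v : Fin (k+1) → V) (Fin.castSucc s) = c s := Fin.snoc_castSucc (α := fun _ => V) v c s
    exact congrArg₂ (fun (f : Fin s.1 → V) (t : V) => π.prob s.1 (x, f) t) harg htok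
  have hlast : π.prob (Fin.last k).1 (x, fun u : Fin (Fin.last k).1 =>
        (Fin.snoc c v : Fin (k+1) → V) (Fin.castLE (Fin.last k).isLt.le u)) ((Fin.snoc c v : Fin (k+1) → V) (Fin.last k))
      = π.prob k (x, c) v := by
    have harg : (fun u : Fin k => (Fin.snoc c v : Fin (k+1) → V) (Fin.castLE (Fin.last k).isLt.le u)) = c := by
      funext u
      exact snoc_lt c v _ u.isLt
    have htok : (Fin.snoc c v : Fin (k+1) → V) (Fin.last k) = v := Fin.snoc_last (α := fun _ => V) v c
    exact congrArg₂ (fun (f : Fin k → V) (t : V) => π.prob k (x, f) t) harg htok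
  rw [Finset.prod_congr rfl (fun s _ => hcast s), hlast]
  rfl

lemma sum_snoc (k : ℕ) (g : (Fin (k+1) → V) → ℝ) :
    ∑ c : Fin (k+1) → V, g c = ∑ c : Fin k → V, ∑ v : V, g (Fin.snoc c v) := by
  rw [← Equiv.sum_comp (snocE k V) g, Fintype.sum_prod_type]
  rfl

/-- Chain rule bound for prefix KL. -/
lemma prefKL_le [Nonempty V] (roll θ : Policy X V) (x : X) (T : ℕ) (Dkl : ℝ)
    (hD : ∀ k : ℕ, k < T → ∀ c : X × (Fin k → V),
      klDiv (roll.prob k c) (θ.prob k c) ≤ Dkl) :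
    ∀ k : ℕ, k ≤ T → klDiv (prefP roll k x) (prefP θ k x) ≤ k * Dkl := by
  intro k
  induction k with
  | zero =>
    intro _
    have : klDiv (prefP roll 0 x) (prefP θ 0 x) = 0 := by
      rw [klDiv]
      apply Finset.sum_eq_zero
      intro c _
      have h1 : prefP roll 0 x c = 1 := by rw [prefP]; simp
      have h2 : prefP θ 0 x c = 1 := by rw [prefP]; simp
      rw [h1, h2]
      norm_num
    rw [this]
    norm_num
  | succ k ih =>
    intro hk1
    have hkT : k < T := by omega
    have hkT' : k ≤ T := by omega
    have hDk : 0 ≤ Dkl := by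
      have h := hD k hkT (x, fun _ => Classical.arbitrary V)
      have h0 := klDiv_nonneg (p := roll.prob k (x, fun _ => Classical.arbitrary V))
        (q := θ.prob k (x, fun _ => Classical.arbitrary V))
        (fun v => roll.pos k _ v) (fun v => θ.pos k _ v)
        (roll.sum_one k _) (θ.sum_one k _)
      linarith
    have key : klDiv (prefP roll (k+1) x) (prefP θ (k+1) x)
        = klDiv (prefP roll k x) (prefP θ k x)
          + ∑ c : Fin k → V, prefP roll k x c
              * klDiv (roll.prob k (x, c)) (θ.prob k (x, c)) := by
      rw [klDiv, sum_snoc]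
      have hterm : ∀ c : Fin k → V, ∀ v : V,
          prefP roll (k+1) x (Fin.snoc c v)
            * Real.log (prefP roll (k+1) x (Fin.snoc c v) / prefP θ (k+1) x (Fin.snoc c v))
          = prefP roll k x c * roll.prob k (x, c) v
            * (Real.log (prefP roll k x c / prefP θ k x c)
               + Real.log (roll.prob k (x, c) v / θ.prob k (x, c) v)) := by
        intro c v
        rw [prefP_snoc, prefP_snoc]
        congr 1
        rw [← div_mul_div_comm]
        rw [Real.log_mul (ne_of_gt (div_pos (prefP_pos roll k x c) (prefP_pos θ k x c)))
          (ne_of_gt (div_pos (roll.pos k (x,c) v) (θ.pos k (x,c) v)))]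
      calc ∑ c : Fin k → V, ∑ v : V,
            prefP roll (k+1) x (Fin.snoc c v)
              * Real.log (prefP roll (k+1) x (Fin.snoc c v) / prefP θ (k+1) x (Fin.snoc c v))
          = ∑ c : Fin k → V, ∑ v : V, (prefP roll k x c * roll.prob k (x, c) v
              * Real.log (prefP roll k x c / prefP θ k x c)
            + prefP roll k x c * (roll.prob k (x, c) v
              * Real.log (roll.prob k (x, c) v / θ.prob k (x, c) v))) := by
            apply Finset.sum_congr rfl; intro c _
            apply Finset.sum_congr rfl; intro v _
            rw [hterm c v]; ring
        _ = ∑ c : Fin k → V, (prefP roll k x c * Real.log (prefP roll k x c / prefP θ k x c)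
            + prefP roll k x c * klDiv (roll.prob k (x, c)) (θ.prob k (x, c))) := by
            apply Finset.sum_congr rfl; intro c _
            rw [Finset.sum_add_distrib, ← Finset.sum_mul, ← Finset.mul_sum, ← Finset.mul_sum,
              roll.sum_one k (x, c), klDiv]
            ring
        _ = klDiv (prefP roll k x) (prefP θ k x)
            + ∑ c : Fin k → V, prefP roll k x c * klDiv (roll.prob k (x, c)) (θ.prob k (x, c)) := by
            rw [Finset.sum_add_distrib, klDiv]
    rw [key]
    have hbound : ∑ c : Fin k → V, prefP roll k x c * klDiv (roll.prob k (x, c)) (θ.prob k (x, c))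
        ≤ Dkl := by
      calc ∑ c : Fin k → V, prefP roll k x c * klDiv (roll.prob k (x, c)) (θ.prob k (x, c))
          ≤ ∑ c : Fin k → V, prefP roll k x c * Dkl := by
            apply Finset.sum_le_sum
            intro c _
            exact mul_le_mul_of_nonneg_left (hD k hkT (x, c)) (le_of_lt (prefP_pos roll k x c))
        _ = Dkl := by rw [← Finset.sum_mul, prefP_sum, one_mul]
    have := ih hkT'
    push_cast
    linarith

end PfAux
namespace PfAux
open scoped Classical
set_option linter.unusedSectionVars false
set_option linter.unusedVariables false
variable {X V : Type*} [Fintype X] [Fintype V]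

lemma Qval_def (T : ℕ) (R : X → (Fin T → V) → ℝ) (π : Policy X V)
    (k : ℕ) (hk : k < T) (c : X × (Fin k → V)) (v : V) :
    Qval T R π k hk c v = ∑ y : Fin T → V,
      if (∀ s : Fin k, y (Fin.castLE hk.le s) = c.2 s) ∧ y ⟨k, hk⟩ = v then
        (∏ s : Fin T, if k < s.1 then step π c.1 y s else 1) * R c.1 y
      else 0 := rfl

lemma Qval_tailsum (T : ℕ) (π : Policy X V) (k : ℕ) (hk : k < T) (c : X × (Fin k → V)) (v : V) :
    ∑ y : Fin T → V,
      (if (∀ s : Fin k, y (Fin.castLE hk.le s) = c.2 s) ∧ y ⟨k, hk⟩ = v then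
        (∏ s : Fin T, if k < s.1 then step π c.1 y s else 1)
      else 0) = 1 := by
  set w : Fin T → V := fun s => if h : s.1 < k then c.2 ⟨s.1, h⟩ else v with hw
  have hiff : ∀ y : Fin T → V,
      ((∀ s : Fin k, y (Fin.castLE hk.le s) = c.2 s) ∧ y ⟨k, hk⟩ = v)
      ↔ (∀ s : Fin T, s.1 < k + 1 → y s = w s) := by
    intro y
    constructor
    · rintro ⟨h1, h2⟩ s hs
      by_cases hsk : s.1 < k
      · have : y s = c.2 ⟨s.1, hsk⟩ := h1 ⟨s.1, hsk⟩
        rw [this, hw]; simp [hsk]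
      · have hsk' : s = ⟨k, hk⟩ := Fin.ext (show s.1 = k by omega)
        rw [hsk', h2, hw]; simp
    · intro h
      constructor
      · intro s
        have := h (Fin.castLE hk.le s) (show s.1 < k + 1 by have := s.isLt; omega)
        rw [this, hw]
        simp [s.isLt]
      · have := h ⟨k, hk⟩ (show k < k + 1 by omega)
        rw [this, hw]
        simp
  calc ∑ y : Fin T → V,
      (if (∀ s : Fin k, y (Fin.castLE hk.le s) = c.2 s) ∧ y ⟨k, hk⟩ = v then
        (∏ s : Fin T, if k < s.1 then step π c.1 y s else 1) else 0)
      = ∑ y : Fin T → V, (if ∀ s : Fin T, s.1 < k + 1 → y s = w s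
          then ∏ s : Fin T, (if k + 1 ≤ s.1 then step π c.1 y s else 1) else 0) := by
        apply Finset.sum_congr rfl; intro y _
        apply if_congr (hiff y) _ rfl
        apply Finset.prod_congr rfl; intro s _
        apply if_congr (by omega) rfl rfl
    _ = 1 := tailsum π c.1 (T - (k+1)) (k+1) hk rfl w

lemma Qval_nonneg (T : ℕ) (R : X → (Fin T → V) → ℝ) (π : Policy X V)
    (k : ℕ) (hk : k < T) (c : X × (Fin k → V)) (v : V)
    (hR : ∀ x y, R x y ∈ Set.Icc (0:ℝ) 1) : 0 ≤ Qval T R π k hk c v := by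
  rw [Qval_def]
  apply Finset.sum_nonneg
  intro y _
  by_cases h : (∀ s : Fin k, y (Fin.castLE hk.le s) = c.2 s) ∧ y ⟨k, hk⟩ = v
  · rw [if_pos h]
    apply mul_nonneg
    · apply Finset.prod_nonneg
      intro s _
      by_cases hs : k < s.1
      · rw [if_pos hs]; exact le_of_lt (step_pos π c.1 y s)
      · rw [if_neg hs]; norm_num
    · exact (hR c.1 y).1
  · rw [if_neg h]

lemma Qval_le_one (T : ℕ) (R : X → (Fin T → V) → ℝ) (π : Policy X V)
    (k : ℕ) (hk : k < T) (c : X × (Fin k → V)) (v : V)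
    (hR : ∀ x y, R x y ∈ Set.Icc (0:ℝ) 1) : Qval T R π k hk c v ≤ 1 := by
  rw [Qval_def]
  calc ∑ y : Fin T → V,
      (if (∀ s : Fin k, y (Fin.castLE hk.le s) = c.2 s) ∧ y ⟨k, hk⟩ = v then
        (∏ s : Fin T, if k < s.1 then step π c.1 y s else 1) * R c.1 y else 0)
      ≤ ∑ y : Fin T → V,
      (if (∀ s : Fin k, y (Fin.castLE hk.le s) = c.2 s) ∧ y ⟨k, hk⟩ = v then
        (∏ s : Fin T, if k < s.1 then step π c.1 y s else 1) else 0) := by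
        apply Finset.sum_le_sum
        intro y _
        by_cases h : (∀ s : Fin k, y (Fin.castLE hk.le s) = c.2 s) ∧ y ⟨k, hk⟩ = v
        · rw [if_pos h, if_pos h]
          have hprod : (0:ℝ) ≤ ∏ s : Fin T, if k < s.1 then step π c.1 y s else 1 := by
            apply Finset.prod_nonneg
            intro s _
            by_cases hs : k < s.1
            · rw [if_pos hs]; exact le_of_lt (step_pos π c.1 y s)
            · rw [if_neg hs]; norm_num
          calc (∏ s : Fin T, if k < s.1 then step π c.1 y s else 1) * R c.1 y
              ≤ (∏ s : Fin T, if k < s.1 then step π c.1 y s else 1) * 1 :=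
                mul_le_mul_of_nonneg_left (hR c.1 y).2 hprod
            _ = _ := mul_one _
        · rw [if_neg h, if_neg h]
    _ = 1 := Qval_tailsum T π k hk c v

lemma gval_eq (T : ℕ) (R : X → (Fin T → V) → ℝ) (roll θ : Policy X V)
    (k : ℕ) (hk : k < T) (c : X × (Fin k → V)) :
    gval T R roll θ k hk c
      = ∑ v, (θ.prob k c v - roll.prob k c v) * Qval T R roll k hk c v := by
  rw [gval]
  have h1 : ∀ v ∈ Finset.univ, θ.prob k c v * Aval T R roll k hk c v
      = θ.prob k c v * Qval T R roll k hk c v - θ.prob k c v * Vval T R roll k hk c := by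
    intro v _; rw [Aval]; ring
  have h2 : ∀ v ∈ Finset.univ, (θ.prob k c v - roll.prob k c v) * Qval T R roll k hk c v
      = θ.prob k c v * Qval T R roll k hk c v - roll.prob k c v * Qval T R roll k hk c v := by
    intro v _; ring
  rw [Finset.sum_congr rfl h1, Finset.sum_congr rfl h2,
    Finset.sum_sub_distrib, Finset.sum_sub_distrib, ← Finset.sum_mul, θ.sum_one k c, one_mul,
    Vval]

lemma gval_abs_le (T : ℕ) (R : X → (Fin T → V) → ℝ) (roll θ : Policy X V)
    (k : ℕ) (hk : k < T) (c : X × (Fin k → V))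
    (hR : ∀ x y, R x y ∈ Set.Icc (0:ℝ) 1) (Dkl : ℝ)
    (hD : klDiv (roll.prob k c) (θ.prob k c) ≤ Dkl) :
    |gval T R roll θ k hk c| ≤ Real.sqrt Dkl := by
  have hQ : ∀ v, |Qval T R roll k hk c v - 1/2| ≤ 1/2 := by
    intro v
    rw [abs_le]
    constructor
    · have := Qval_nonneg T R roll k hk c v hR; linarith
    · have := Qval_le_one T R roll k hk c v hR; linarith
  have key : gval T R roll θ k hk c
      = ∑ v, (θ.prob k c v - roll.prob k c v) * (Qval T R roll k hk c v - 1/2) := by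
    rw [gval_eq]
    have : ∀ v ∈ Finset.univ, (θ.prob k c v - roll.prob k c v) * (Qval T R roll k hk c v - 1/2)
        = (θ.prob k c v - roll.prob k c v) * Qval T R roll k hk c v
          - (1/2) * (θ.prob k c v - roll.prob k c v) := by intro v _; ring
    rw [Finset.sum_congr rfl this, Finset.sum_sub_distrib, ← Finset.mul_sum,
      Finset.sum_sub_distrib, θ.sum_one k c, roll.sum_one k c]
    norm_num
  have habs : |gval T R roll θ k hk c| ≤ ∑ v, |roll.prob k c v - θ.prob k c v| * (1/2) := by
    rw [key]
    calc |∑ v, (θ.prob k c v - roll.prob k c v) * (Qval T R roll k hk c v - 1/2)|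
        ≤ ∑ v, |(θ.prob k c v - roll.prob k c v) * (Qval T R roll k hk c v - 1/2)| :=
          Finset.abs_sum_le_sum_abs _ _
      _ ≤ ∑ v, |roll.prob k c v - θ.prob k c v| * (1/2) := by
          apply Finset.sum_le_sum
          intro v _
          rw [abs_mul, abs_sub_comm]
          exact mul_le_mul_of_nonneg_left (hQ v) (abs_nonneg _)
  have hpin : ∑ v, |roll.prob k c v - θ.prob k c v|
      ≤ 2 * Real.sqrt (klDiv (roll.prob k c) (θ.prob k c)) :=
    pinsker (fun v => roll.pos k c v) (fun v => θ.pos k c v) (roll.sum_one k c) (θ.sum_one k c)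
  have hs : Real.sqrt (klDiv (roll.prob k c) (θ.prob k c)) ≤ Real.sqrt Dkl :=
    Real.sqrt_le_sqrt hD
  calc |gval T R roll θ k hk c| ≤ ∑ v, |roll.prob k c v - θ.prob k c v| * (1/2) := habs
    _ = (∑ v, |roll.prob k c v - θ.prob k c v|) * (1/2) := by rw [Finset.sum_mul]
    _ ≤ (2 * Real.sqrt (klDiv (roll.prob k c) (θ.prob k c))) * (1/2) := by
        apply mul_le_mul_of_nonneg_right hpin; norm_num
    _ ≤ Real.sqrt Dkl := by linarith

end PfAux
namespace PfAux
open scoped Classical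
set_option linter.unusedSectionVars false
set_option linter.unusedVariables false
variable {X V : Type*} [Fintype X] [Fintype V]

noncomputable def hyb (P : X → ℝ) (T : ℕ) (R : X → (Fin T → V) → ℝ)
    (roll θ : Policy X V) (k : ℕ) : ℝ :=
  ∑ x, P x * ∑ y : Fin T → V,
    (∏ t : Fin T, if t.1 < k then step θ x y t else step roll x y t) * R x y

lemma hyb_zero (P : X → ℝ) (T : ℕ) (R : X → (Fin T → V) → ℝ) (roll θ : Policy X V) :
    hyb P T R roll θ 0 = Jval P T R roll := by
  rw [hyb, Jval]
  apply Finset.sum_congr rfl; intro x _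
  have hy : ∀ y : Fin T → V,
      (∏ t : Fin T, if t.1 < 0 then step θ x y t else step roll x y t) = traj roll T x y := by
    intro y; rw [traj_eq]
    apply Finset.prod_congr rfl; intro t _
    rw [if_neg (by omega)]
  rw [Finset.sum_congr rfl (fun y _ => by rw [hy y])]

lemma hyb_top (P : X → ℝ) (T : ℕ) (R : X → (Fin T → V) → ℝ) (roll θ : Policy X V) :
    hyb P T R roll θ T = Jval P T R θ := by
  rw [hyb, Jval]
  apply Finset.sum_congr rfl; intro x _
  have hy : ∀ y : Fin T → V,
      (∏ t : Fin T, if t.1 < T then step θ x y t else step roll x y t) = traj θ T x y := by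
    intro y; rw [traj_eq]
    apply Finset.prod_congr rfl; intro t _
    rw [if_pos t.isLt]
  rw [Finset.sum_congr rfl (fun y _ => by rw [hy y])]

lemma hyb_step (P : X → ℝ) (T : ℕ) (R : X → (Fin T → V) → ℝ) (roll θ : Policy X V)
    (k : ℕ) (hk : k < T) :
    hyb P T R roll θ (k+1) - hyb P T R roll θ k
      = ∑ c : X × (Fin k → V), visit θ P k c * gval T R roll θ k hk c := by
  have perx : ∀ x : X,
      (∑ y : Fin T → V,
          (∏ t : Fin T, if t.1 < k + 1 then step θ x y t else step roll x y t) * R x y)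
      - (∑ y : Fin T → V,
          (∏ t : Fin T, if t.1 < k then step θ x y t else step roll x y t) * R x y)
      = ∑ c2 : Fin k → V, prefP θ k x c2
          * (∑ v, (θ.prob k (x, c2) v - roll.prob k (x, c2) v)
              * Qval T R roll k hk (x, c2) v) := by
    intro x
    have e1 : ∀ y : Fin T → V,
        (∏ t : Fin T, if t.1 < k + 1 then step θ x y t else step roll x y t)
        = step θ x y ⟨k, hk⟩ * ∏ t ∈ Finset.univ.erase (⟨k, hk⟩ : Fin T),
          (if t.1 < k then step θ x y t else step roll x y t) := by
      intro y
      rw [← Finset.mul_prod_erase Finset.univ _ (Finset.mem_univ (⟨k, hk⟩ : Fin T))]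
      congr 1
      · exact if_pos (Nat.lt_succ_self k)
      · apply Finset.prod_congr rfl
        intro t ht
        have hne : t.1 ≠ k := fun hc => (Finset.ne_of_mem_erase ht) (Fin.ext hc)
        by_cases h : t.1 < k
        · rw [if_pos (by omega), if_pos h]
        · rw [if_neg (by omega), if_neg h]
    have e2 : ∀ y : Fin T → V,
        (∏ t : Fin T, if t.1 < k then step θ x y t else step roll x y t)
        = step roll x y ⟨k, hk⟩ * ∏ t ∈ Finset.univ.erase (⟨k, hk⟩ : Fin T),
          (if t.1 < k then step θ x y t else step roll x y t) := by
      intro y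
      rw [← Finset.mul_prod_erase Finset.univ _ (Finset.mem_univ (⟨k, hk⟩ : Fin T))]
      congr 1
      exact if_neg (lt_irrefl k)
    have e3 : ∀ y : Fin T → V, (∏ t ∈ Finset.univ.erase (⟨k, hk⟩ : Fin T),
          (if t.1 < k then step θ x y t else step roll x y t))
        = (∏ t : Fin T, if t.1 < k then step θ x y t else 1)
          * (∏ t : Fin T, if k < t.1 then step roll x y t else 1) := by
      intro y
      rw [← Finset.prod_filter_mul_prod_filter_not (Finset.univ.erase (⟨k, hk⟩ : Fin T))
        (fun t => t.1 < k)]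
      congr 1
      · have hf1 : (Finset.univ.erase (⟨k, hk⟩ : Fin T)).filter (fun t => t.1 < k)
            = Finset.univ.filter (fun t : Fin T => t.1 < k) := by
          ext t
          simp only [Finset.mem_filter, Finset.mem_erase, Finset.mem_univ, true_and, and_true]
          constructor
          · rintro ⟨_, h⟩; exact h
          · intro h
            exact ⟨fun hc => by rw [hc] at h; exact absurd h (lt_irrefl k), h⟩
        rw [hf1, Finset.prod_filter]
        apply Finset.prod_congr rfl
        intro t _
        by_cases h : t.1 < k
        · rw [if_pos h, if_pos h, if_pos h]
        · rw [if_neg h, if_neg h]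
      · have hf2 : (Finset.univ.erase (⟨k, hk⟩ : Fin T)).filter (fun t => ¬ t.1 < k)
            = Finset.univ.filter (fun t : Fin T => k < t.1) := by
          ext t
          simp only [Finset.mem_filter, Finset.mem_erase, Finset.mem_univ, true_and, and_true]
          constructor
          · rintro ⟨hne, h⟩
            have : t.1 ≠ k := fun hc => hne (Fin.ext hc)
            omega
          · intro h
            exact ⟨fun hc => by rw [hc] at h; exact absurd h (lt_irrefl k), by omega⟩
        rw [hf2, Finset.prod_filter]
        apply Finset.prod_congr rfl
        intro t _
        by_cases h : k < t.1
        · rw [if_pos h, if_neg (by omega), if_pos h]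
        · rw [if_neg h, if_neg h]
    have hq : ∀ c2 : Fin k → V,
        prefP θ k x c2 * (∑ v, (θ.prob k (x, c2) v - roll.prob k (x, c2) v)
            * Qval T R roll k hk (x, c2) v)
        = ∑ v, ∑ y : Fin T → V,
            (if (∀ s : Fin k, y (Fin.castLE hk.le s) = c2 s) ∧ y ⟨k, hk⟩ = v then
              prefP θ k x c2 * ((θ.prob k (x, c2) v - roll.prob k (x, c2) v)
                * ((∏ s : Fin T, if k < s.1 then step roll x y s else 1) * R x y))
            else 0) := by
      intro c2
      rw [Finset.mul_sum]
      apply Finset.sum_congr rfl; intro v _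
      rw [Qval_def, Finset.mul_sum, Finset.mul_sum]
      apply Finset.sum_congr rfl; intro y _
      by_cases h : (∀ s : Fin k, y (Fin.castLE hk.le s) = c2 s) ∧ y ⟨k, hk⟩ = v
      · rw [if_pos h, if_pos h]
      · rw [if_neg h, if_neg h, mul_zero, mul_zero]
    calc (∑ y : Fin T → V,
          (∏ t : Fin T, if t.1 < k + 1 then step θ x y t else step roll x y t) * R x y)
        - (∑ y : Fin T → V,
          (∏ t : Fin T, if t.1 < k then step θ x y t else step roll x y t) * R x y)
        = ∑ y : Fin T → V,
            prefP θ k x (fun s => y (Fin.castLE hk.le s))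
            * ((θ.prob k (x, fun s => y (Fin.castLE hk.le s)) (y ⟨k, hk⟩)
                - roll.prob k (x, fun s => y (Fin.castLE hk.le s)) (y ⟨k, hk⟩))
              * ((∏ s : Fin T, if k < s.1 then step roll x y s else 1) * R x y)) := by
          rw [← Finset.sum_sub_distrib]
          apply Finset.sum_congr rfl; intro y _
          rw [e1, e2, e3]
          have hpre : (∏ t : Fin T, if t.1 < k then step θ x y t else 1)
              = prefP θ k x (fun s => y (Fin.castLE hk.le s)) :=
            prod_lt_eq_pref hk.le _ _ (fun s => rfl)
          have hstθ : step θ x y ⟨k, hk⟩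
              = θ.prob k (x, fun s => y (Fin.castLE hk.le s)) (y ⟨k, hk⟩) := rfl
          have hstr : step roll x y ⟨k, hk⟩
              = roll.prob k (x, fun s => y (Fin.castLE hk.le s)) (y ⟨k, hk⟩) := rfl
          rw [hpre, hstθ, hstr]
          ring
      _ = ∑ c2 : Fin k → V, prefP θ k x c2
          * (∑ v, (θ.prob k (x, c2) v - roll.prob k (x, c2) v)
              * Qval T R roll k hk (x, c2) v) := by
          rw [Finset.sum_congr rfl (fun c2 _ => hq c2)]
          exact (collapse2 hk (fun c2 v y =>
            prefP θ k x c2 * ((θ.prob k (x, c2) v - roll.prob k (x, c2) v)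
              * ((∏ s : Fin T, if k < s.1 then step roll x y s else 1) * R x y)))).symm
  calc hyb P T R roll θ (k+1) - hyb P T R roll θ k
      = ∑ x, P x * ((∑ y : Fin T → V,
          (∏ t : Fin T, if t.1 < k + 1 then step θ x y t else step roll x y t) * R x y)
        - (∑ y : Fin T → V,
          (∏ t : Fin T, if t.1 < k then step θ x y t else step roll x y t) * R x y)) := by
        rw [hyb, hyb, ← Finset.sum_sub_distrib]
        apply Finset.sum_congr rfl; intro x _
        rw [mul_sub]
    _ = ∑ x, P x * ∑ c2 : Fin k → V, prefP θ k x c2 * gval T R roll θ k hk (x, c2) := by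
        apply Finset.sum_congr rfl; intro x _
        rw [perx x]
        congr 1
        apply Finset.sum_congr rfl; intro c2 _
        rw [gval_eq]
    _ = ∑ c : X × (Fin k → V), visit θ P k c * gval T R roll θ k hk c := by
        rw [Fintype.sum_prod_type]
        apply Finset.sum_congr rfl; intro x _
        rw [Finset.mul_sum]
        apply Finset.sum_congr rfl; intro c2 _
        rw [visit_eq]
        ring

/-- The error decomposition. -/
lemma err_decomp (P : X → ℝ) (T : ℕ) (R : X → (Fin T → V) → ℝ) (roll θ : Policy X V) :
    errVal P T R roll θ
      = ∑ k : Fin T, ∑ c : X × (Fin k.1 → V),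
          (visit θ P k.1 c - visit roll P k.1 c) * gval T R roll θ k.1 k.isLt c := by
  have h1 : Jval P T R θ - Jval P T R roll
      = ∑ k : Fin T, ∑ c : X × (Fin k.1 → V),
          visit θ P k.1 c * gval T R roll θ k.1 k.isLt c := by
    have h0 : Jval P T R θ - Jval P T R roll
        = hyb P T R roll θ T - hyb P T R roll θ 0 := by
      rw [hyb_zero, hyb_top]
    rw [h0, ← Finset.sum_range_sub (fun m => hyb P T R roll θ m) T,
      ← Fin.sum_univ_eq_sum_range (fun i => hyb P T R roll θ (i+1) - hyb P T R roll θ i) T]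
    apply Finset.sum_congr rfl; intro k _
    exact hyb_step P T R roll θ k.1 k.isLt
  calc errVal P T R roll θ
      = (Jval P T R θ - Jval P T R roll) - surrogate P T R roll θ := by
        rw [errVal]
    _ = ∑ k : Fin T, ∑ c : X × (Fin k.1 → V),
          (visit θ P k.1 c - visit roll P k.1 c) * gval T R roll θ k.1 k.isLt c := by
        rw [h1, surrogate, ← Finset.sum_sub_distrib]
        apply Finset.sum_congr rfl; intro k _
        rw [← Finset.sum_sub_distrib]
        apply Finset.sum_congr rfl; intro c _
        ring

end PfAux
namespace PfAux
open scoped Classical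
set_option linter.unusedSectionVars false
set_option linter.unusedVariables false
variable {X V : Type*} [Fintype X] [Fintype V]

lemma visitdiff (roll θ : Policy X V) (P : X → ℝ) (hP0 : ∀ x, 0 ≤ P x) (k : ℕ) :
    ∑ c : X × (Fin k → V), |visit θ P k c - visit roll P k c|
    = ∑ x, P x * ∑ c2 : Fin k → V, |prefP θ k x c2 - prefP roll k x c2| := by
  rw [Fintype.sum_prod_type]
  apply Finset.sum_congr rfl; intro x _
  rw [Finset.mul_sum]
  apply Finset.sum_congr rfl; intro c2 _
  rw [visit_eq, visit_eq, ← mul_sub, abs_mul, abs_of_nonneg (hP0 x)]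

lemma prefL1_bound1 [Nonempty V] (roll θ : Policy X V) (x : X) (T : ℕ) (Dkl : ℝ)
    (hD : ∀ k : ℕ, k < T → ∀ c : X × (Fin k → V),
      klDiv (roll.prob k c) (θ.prob k c) ≤ Dkl)
    (k : ℕ) (hk : k ≤ T) :
    ∑ c2 : Fin k → V, |prefP θ k x c2 - prefP roll k x c2|
      ≤ 2 * Real.sqrt (k * Dkl) := by
  have hpin := pinsker (p := prefP roll k x) (q := prefP θ k x)
    (fun c2 => prefP_pos roll k x c2) (fun c2 => prefP_pos θ k x c2)
    (prefP_sum roll k x) (prefP_sum θ k x)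
  have hKL := prefKL_le roll θ x T Dkl hD k hk
  calc ∑ c2 : Fin k → V, |prefP θ k x c2 - prefP roll k x c2|
      = ∑ c2 : Fin k → V, |prefP roll k x c2 - prefP θ k x c2| := by
        apply Finset.sum_congr rfl; intro c2 _; rw [abs_sub_comm]
    _ ≤ 2 * Real.sqrt (klDiv (prefP roll k x) (prefP θ k x)) := hpin
    _ ≤ 2 * Real.sqrt (k * Dkl) := by
        have := Real.sqrt_le_sqrt hKL
        linarith

lemma prefL1_marg [Nonempty V] (roll θ : Policy X V) (x : X) {T : ℕ} {k : ℕ} (hk : k ≤ T) :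
    ∑ c2 : Fin k → V, |prefP θ k x c2 - prefP roll k x c2|
      ≤ ∑ y : Fin T → V, |traj θ T x y - traj roll T x y| := by
  have key : ∀ c2 : Fin k → V, |prefP θ k x c2 - prefP roll k x c2|
      ≤ ∑ y : Fin T → V, (if ∀ s : Fin k, y (Fin.castLE hk s) = c2 s
          then |traj θ T x y - traj roll T x y| else 0) := by
    intro c2
    rw [← marg θ x hk c2, ← marg roll x hk c2, ← Finset.sum_sub_distrib]
    calc |∑ y : Fin T → V, ((if ∀ s : Fin k, y (Fin.castLE hk s) = c2 s then traj θ T x y else 0)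
          - (if ∀ s : Fin k, y (Fin.castLE hk s) = c2 s then traj roll T x y else 0))|
        ≤ ∑ y : Fin T → V, |(if ∀ s : Fin k, y (Fin.castLE hk s) = c2 s then traj θ T x y else 0)
          - (if ∀ s : Fin k, y (Fin.castLE hk s) = c2 s then traj roll T x y else 0)| :=
          Finset.abs_sum_le_sum_abs _ _
      _ = ∑ y : Fin T → V, (if ∀ s : Fin k, y (Fin.castLE hk s) = c2 s
          then |traj θ T x y - traj roll T x y| else 0) := by
          apply Finset.sum_congr rfl; intro y _
          by_cases h : ∀ s : Fin k, y (Fin.castLE hk s) = c2 s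
          · rw [if_pos h, if_pos h, if_pos h]
          · rw [if_neg h, if_neg h, if_neg h, sub_zero, abs_zero]
  calc ∑ c2 : Fin k → V, |prefP θ k x c2 - prefP roll k x c2|
      ≤ ∑ c2 : Fin k → V, ∑ y : Fin T → V, (if ∀ s : Fin k, y (Fin.castLE hk s) = c2 s
          then |traj θ T x y - traj roll T x y| else 0) := Finset.sum_le_sum (fun c2 _ => key c2)
    _ = ∑ y : Fin T → V, |traj θ T x y - traj roll T x y| :=
        collapse1 hk (fun y => |traj θ T x y - traj roll T x y|)

lemma sum_sqrt_le (T : ℕ) :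
    ∑ k ∈ Finset.range T, Real.sqrt k ≤ (2/3) * T * Real.sqrt T := by
  induction T with
  | zero => simp
  | succ n ih =>
    rw [Finset.sum_range_succ]
    have ha : Real.sqrt n ^ 2 = (n:ℝ) := Real.sq_sqrt (Nat.cast_nonneg n)
    have hb : Real.sqrt (n+1:ℕ) ^ 2 = ((n:ℝ)+1) := by
      rw [Real.sq_sqrt (Nat.cast_nonneg (n+1))]; push_cast; ring
    have ha0 : 0 ≤ Real.sqrt n := Real.sqrt_nonneg _
    have hb0 : 0 ≤ Real.sqrt (n+1:ℕ) := Real.sqrt_nonneg _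
    have hab : Real.sqrt n ≤ Real.sqrt (n+1:ℕ) := by
      apply Real.sqrt_le_sqrt; push_cast; linarith
    set a := Real.sqrt n
    set b := Real.sqrt (n+1:ℕ)
    have hstep : (2/3) * n * a + a ≤ (2/3) * ((n:ℝ)+1) * b := by
      have h1 : (b - a) * (a + b) = 1 := by nlinarith [ha, hb]
      have h2 : 0 ≤ b - a := by linarith
      have h3 : a * b ≤ b * b := by nlinarith [hb0, hab]
      have key : 0 ≤ (b - a) * (2*b^2 - a*b - a^2) := by
        apply mul_nonneg h2
        nlinarith [h3, ha, hb]
      nlinarith [key, h1, ha, hb]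
    have hcast : ((n+1:ℕ):ℝ) = (n:ℝ) + 1 := by push_cast; ring
    rw [hcast]
    linarith [ih]

end PfAux
/-- **Adaptive error bound**: if the reward takes values in `[0,1]`, then
`|Error| ≤ min {(4/3)·T^(3/2)·D_KL^tok,max, 2·T·√(D_KL^tok,max · D_KL^seq)}`. Here `Dkl`
is (an upper bound on, in particular the maximum of) the token-level KL divergences
`D_KL(π_roll(·|c) ‖ π_θ(·|c))` over all steps and contexts. -/
theorem adaptive_error_bound
    {X V : Type*} [Fintype X] [Fintype V]
    (T : ℕ) (hT : 1 ≤ T)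
    (P : X → ℝ) (hP0 : ∀ x, 0 ≤ P x) (hP1 : ∑ x, P x = 1)
    (R : X → (Fin T → V) → ℝ) (hR : ∀ x y, R x y ∈ Set.Icc (0:ℝ) 1)
    (πroll πθ : Policy X V)
    (Dkl : ℝ)
    (hDkl : ∀ k : ℕ, k < T → ∀ c : X × (Fin k → V),
      klDiv (πroll.prob k c) (πθ.prob k c) ≤ Dkl) :
    |errVal P T R πroll πθ| ≤
      min ((4 / 3) * (T : ℝ) ^ ((3 : ℝ) / 2) * Dkl)
        (2 * T * Real.sqrt (Dkl * seqKL P T πroll πθ)) := by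
  classical
  have hXne : Nonempty X := by
    rcases isEmpty_or_nonempty X with h | h
    · exfalso
      rw [Finset.univ_eq_empty, Finset.sum_empty] at hP1
      norm_num at hP1
    · exact h
  have hVne : Nonempty V := by
    rcases isEmpty_or_nonempty V with h | h
    · exfalso
      have h1 := πroll.sum_one 0 (Classical.arbitrary X, fun i : Fin 0 => i.elim0)
      rw [Finset.univ_eq_empty, Finset.sum_empty] at h1
      norm_num at h1
    · exact h
  have hD0 : 0 ≤ Dkl := by
    set c0 : X × (Fin 0 → V) := (Classical.arbitrary X, fun i => i.elim0) with hc0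
    have h1 := hDkl 0 hT c0
    have h2 := PfAux.klDiv_nonneg (p := πroll.prob 0 c0) (q := πθ.prob 0 c0)
      (fun v => πroll.pos 0 c0 v) (fun v => πθ.pos 0 c0 v)
      (πroll.sum_one 0 c0) (πθ.sum_one 0 c0)
    linarith
  have hsD : 0 ≤ Real.sqrt Dkl := Real.sqrt_nonneg _
  have hKL0 : ∀ x : X, 0 ≤ klDiv (fun y : Fin T → V => traj πroll T x y)
      (fun y => traj πθ T x y) := fun x =>
    PfAux.klDiv_nonneg (fun y => PfAux.traj_pos πroll T x y)
      (fun y => PfAux.traj_pos πθ T x y)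
      (PfAux.traj_sum πroll T x) (PfAux.traj_sum πθ T x)
  have hseq0 : 0 ≤ seqKL P T πroll πθ := by
    rw [seqKL]
    exact Finset.sum_nonneg (fun x _ => mul_nonneg (hP0 x) (hKL0 x))
  have hg : ∀ (k : ℕ) (hk : k < T) (c : X × (Fin k → V)),
      |gval T R πroll πθ k hk c| ≤ Real.sqrt Dkl := fun k hk c =>
    PfAux.gval_abs_le T R πroll πθ k hk c hR Dkl (hDkl k hk c)
  have hL1a : ∀ (k : ℕ), k < T →
      ∑ c : X × (Fin k → V), |visit πθ P k c - visit πroll P k c|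
        ≤ 2 * Real.sqrt (k * Dkl) := by
    intro k hk
    rw [PfAux.visitdiff πroll πθ P hP0 k]
    calc ∑ x, P x * ∑ c2 : Fin k → V, |PfAux.prefP πθ k x c2 - PfAux.prefP πroll k x c2|
        ≤ ∑ x, P x * (2 * Real.sqrt (k * Dkl)) := by
          apply Finset.sum_le_sum
          intro x _
          exact mul_le_mul_of_nonneg_left
            (PfAux.prefL1_bound1 πroll πθ x T Dkl hDkl k hk.le) (hP0 x)
      _ = 2 * Real.sqrt (k * Dkl) := by rw [← Finset.sum_mul, hP1, one_mul]
  have hL1b : ∀ (k : ℕ), k < T →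
      ∑ c : X × (Fin k → V), |visit πθ P k c - visit πroll P k c|
        ≤ 2 * Real.sqrt (seqKL P T πroll πθ) := by
    intro k hk
    rw [PfAux.visitdiff πroll πθ P hP0 k]
    have hx : ∀ x : X, ∑ c2 : Fin k → V, |PfAux.prefP πθ k x c2 - PfAux.prefP πroll k x c2|
        ≤ 2 * Real.sqrt (klDiv (fun y : Fin T → V => traj πroll T x y)
            (fun y => traj πθ T x y)) := by
      intro x
      calc ∑ c2 : Fin k → V, |PfAux.prefP πθ k x c2 - PfAux.prefP πroll k x c2|
          ≤ ∑ y : Fin T → V, |traj πθ T x y - traj πroll T x y| :=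
            PfAux.prefL1_marg πroll πθ x hk.le
        _ = ∑ y : Fin T → V, |traj πroll T x y - traj πθ T x y| :=
            Finset.sum_congr rfl (fun y _ => abs_sub_comm _ _)
        _ ≤ 2 * Real.sqrt (klDiv (fun y : Fin T → V => traj πroll T x y)
            (fun y => traj πθ T x y)) :=
            PfAux.pinsker (fun y => PfAux.traj_pos πroll T x y)
              (fun y => PfAux.traj_pos πθ T x y)
              (PfAux.traj_sum πroll T x) (PfAux.traj_sum πθ T x)
    have hCS : ∑ x, P x * Real.sqrt (klDiv (fun y : Fin T → V => traj πroll T x y)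
          (fun y => traj πθ T x y))
        ≤ Real.sqrt (seqKL P T πroll πθ) := by
      set K : X → ℝ := fun x => klDiv (fun y : Fin T → V => traj πroll T x y)
        (fun y => traj πθ T x y) with hKdef
      have h2 := Finset.sum_mul_sq_le_sq_mul_sq Finset.univ
        (fun x => Real.sqrt (P x)) (fun x => Real.sqrt (P x) * Real.sqrt (K x))
      have e1 : ∀ x ∈ Finset.univ,
          Real.sqrt (P x) * (Real.sqrt (P x) * Real.sqrt (K x)) = P x * Real.sqrt (K x) := by
        intro x _; rw [← mul_assoc, Real.mul_self_sqrt (hP0 x)]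
      have e2 : ∀ x ∈ Finset.univ, Real.sqrt (P x) ^ 2 = P x := fun x _ => Real.sq_sqrt (hP0 x)
      have e3 : ∀ x ∈ Finset.univ, (Real.sqrt (P x) * Real.sqrt (K x)) ^ 2 = P x * K x := by
        intro x _; rw [mul_pow, Real.sq_sqrt (hP0 x), Real.sq_sqrt (hKL0 x)]
      rw [Finset.sum_congr rfl e1, Finset.sum_congr rfl e2, Finset.sum_congr rfl e3,
        hP1, one_mul] at h2
      have h4 : 0 ≤ ∑ x, P x * Real.sqrt (K x) :=
        Finset.sum_nonneg (fun x _ => mul_nonneg (hP0 x) (Real.sqrt_nonneg _))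
      have h5 := Real.sqrt_le_sqrt h2
      rw [Real.sqrt_sq h4] at h5
      have hseqeq : seqKL P T πroll πθ = ∑ x, P x * K x := by rw [seqKL]
      rw [hseqeq]
      exact h5
    calc ∑ x, P x * ∑ c2 : Fin k → V, |PfAux.prefP πθ k x c2 - PfAux.prefP πroll k x c2|
        ≤ ∑ x, P x * (2 * Real.sqrt (klDiv (fun y : Fin T → V => traj πroll T x y)
            (fun y => traj πθ T x y))) := by
          apply Finset.sum_le_sum
          intro x _
          exact mul_le_mul_of_nonneg_left (hx x) (hP0 x)
      _ = 2 * ∑ x, P x * Real.sqrt (klDiv (fun y : Fin T → V => traj πroll T x y)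
            (fun y => traj πθ T x y)) := by
          rw [Finset.mul_sum]
          apply Finset.sum_congr rfl
          intro x _; ring
      _ ≤ 2 * Real.sqrt (seqKL P T πroll πθ) := by linarith [hCS]
  have hk_bound : ∀ (k : ℕ) (hk : k < T) (B : ℝ),
      (∑ c : X × (Fin k → V), |visit πθ P k c - visit πroll P k c|) ≤ B →
      |∑ c : X × (Fin k → V), (visit πθ P k c - visit πroll P k c)
          * gval T R πroll πθ k hk c| ≤ B * Real.sqrt Dkl := by
    intro k hk B hB
    calc |∑ c : X × (Fin k → V), (visit πθ P k c - visit πroll P k c)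
            * gval T R πroll πθ k hk c|
        ≤ ∑ c : X × (Fin k → V), |(visit πθ P k c - visit πroll P k c)
            * gval T R πroll πθ k hk c| := Finset.abs_sum_le_sum_abs _ _
      _ ≤ ∑ c : X × (Fin k → V), |visit πθ P k c - visit πroll P k c| * Real.sqrt Dkl := by
          apply Finset.sum_le_sum
          intro c _
          rw [abs_mul]
          exact mul_le_mul_of_nonneg_left (hg k hk c) (abs_nonneg _)
      _ = (∑ c : X × (Fin k → V), |visit πθ P k c - visit πroll P k c|) * Real.sqrt Dkl := by
          rw [Finset.sum_mul]
      _ ≤ B * Real.sqrt Dkl := mul_le_mul_of_nonneg_right hB hsD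
  rw [PfAux.err_decomp P T R πroll πθ]
  have habs : |∑ k : Fin T, ∑ c : X × (Fin k.1 → V),
        (visit πθ P k.1 c - visit πroll P k.1 c) * gval T R πroll πθ k.1 k.isLt c|
      ≤ ∑ k : Fin T, |∑ c : X × (Fin k.1 → V),
        (visit πθ P k.1 c - visit πroll P k.1 c) * gval T R πroll πθ k.1 k.isLt c| :=
    Finset.abs_sum_le_sum_abs _ _
  apply le_min
  · -- first bound
    have hTpos : (0:ℝ) < (T:ℝ) := by exact_mod_cast Nat.lt_of_lt_of_le Nat.zero_lt_one hT
    have hrpow : (T:ℝ) ^ ((3:ℝ)/2) = (T:ℝ) * Real.sqrt (T:ℝ) := by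
      rw [show (3:ℝ)/2 = 1 + 1/2 by norm_num, Real.rpow_add hTpos, Real.rpow_one,
        ← Real.sqrt_eq_rpow]
    calc |∑ k : Fin T, ∑ c : X × (Fin k.1 → V),
          (visit πθ P k.1 c - visit πroll P k.1 c) * gval T R πroll πθ k.1 k.isLt c|
        ≤ ∑ k : Fin T, |∑ c : X × (Fin k.1 → V),
          (visit πθ P k.1 c - visit πroll P k.1 c) * gval T R πroll πθ k.1 k.isLt c| := habs
      _ ≤ ∑ k : Fin T, (2 * Real.sqrt (k.1 * Dkl)) * Real.sqrt Dkl := by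
          apply Finset.sum_le_sum
          intro k _
          exact hk_bound k.1 k.isLt _ (hL1a k.1 k.isLt)
      _ = ∑ k : Fin T, 2 * Dkl * Real.sqrt k.1 := by
          apply Finset.sum_congr rfl
          intro k _
          rw [Real.sqrt_mul (Nat.cast_nonneg k.1) Dkl]
          rw [show 2 * (Real.sqrt k.1 * Real.sqrt Dkl) * Real.sqrt Dkl
            = 2 * (Real.sqrt Dkl * Real.sqrt Dkl) * Real.sqrt k.1 by ring]
          rw [Real.mul_self_sqrt hD0]
      _ = 2 * Dkl * ∑ k ∈ Finset.range T, Real.sqrt k := by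
          rw [← Finset.mul_sum]
          congr 1
          exact Fin.sum_univ_eq_sum_range (fun i => Real.sqrt i) T
      _ ≤ 2 * Dkl * ((2/3) * (T:ℝ) * Real.sqrt (T:ℝ)) := by
          apply mul_le_mul_of_nonneg_left (PfAux.sum_sqrt_le T)
          linarith
      _ = 4 / 3 * (T:ℝ) ^ ((3:ℝ)/2) * Dkl := by
          rw [hrpow]; ring
  · -- second bound
    calc |∑ k : Fin T, ∑ c : X × (Fin k.1 → V),
          (visit πθ P k.1 c - visit πroll P k.1 c) * gval T R πroll πθ k.1 k.isLt c|
        ≤ ∑ k : Fin T, |∑ c : X × (Fin k.1 → V),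
          (visit πθ P k.1 c - visit πroll P k.1 c) * gval T R πroll πθ k.1 k.isLt c| := habs
      _ ≤ ∑ k : Fin T, (2 * Real.sqrt (seqKL P T πroll πθ)) * Real.sqrt Dkl := by
          apply Finset.sum_le_sum
          intro k _
          exact hk_bound k.1 k.isLt _ (hL1b k.1 k.isLt)
      _ = (T:ℝ) * ((2 * Real.sqrt (seqKL P T πroll πθ)) * Real.sqrt Dkl) := by
          rw [Finset.sum_const, Finset.card_univ, Fintype.card_fin, nsmul_eq_mul]
      _ = 2 * (T:ℝ) * Real.sqrt (Dkl * seqKL P T πroll πθ) := by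
          rw [Real.sqrt_mul hD0]
          ring
end

section
/- Monotonic improvement guarantee (Theorem 5.1, item 4): suppose the reward takes values in [0,1], let δ > 0, and assume D_KL^{tok,max} ≤ δ, where D_KL^{tok,max} = max over steps t and contexts c of D_KL(π_roll(·|c) ‖ π_θ(·|c)). If L > min{ (4/3)·T^{3/2}·δ, 2·T·√( δ · D_KL^{seq} ) }, where D_KL^{seq} = E_{x∼P}[ D_KL(P^{π_roll}(·|x) ‖ P^{π_θ}(·|x)) ], then J(π_θ) > J(π_roll). -/
open Finset

set_option linter.unusedSectionVars false

section ProofAux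
section AuxMass
open scoped Classical
variable {V : Type*} [Fintype V]

noncomputable def mass (f : ∀ t : ℕ, (Fin t → V) → V → ℝ) : ∀ k : ℕ, (Fin k → V) → ℝ :=
  fun k p => ∏ s : Fin k, f s.1 (fun u : Fin s.1 => p (Fin.castLE s.isLt.le u)) (p s)

lemma snoc_of_lt {k : ℕ} (p : Fin k → V) (v : V) (u : Fin (k+1)) (hu : u.1 < k) :
    (Fin.snoc p v : Fin (k+1) → V) u = p ⟨u.1, hu⟩ :=
  Fin.snoc_castSucc (α := fun _ => V) (p := p) (x := v) (i := ⟨u.1, hu⟩)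

lemma mass_snoc (f : ∀ t : ℕ, (Fin t → V) → V → ℝ) (k : ℕ) (p : Fin k → V) (v : V) :
    mass f (k+1) (Fin.snoc p v) = mass f k p * f k p v := by
  unfold mass
  rw [Fin.prod_univ_castSucc]
  congr 1
  · refine Finset.prod_congr rfl fun s _ => ?_
    congr 1
    · funext u
      exact snoc_of_lt p v _ (u.2.trans s.2)
    · exact snoc_of_lt p v _ s.2
  · congr 1
    · funext u
      exact snoc_of_lt p v _ u.2
    · exact Fin.snoc_last (α := fun _ => V) v p

lemma sum_pi_succ {k : ℕ} (g : (Fin (k+1) → V) → ℝ) :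
    ∑ p : Fin (k+1) → V, g p = ∑ q : Fin k → V, ∑ v : V, g (Fin.snoc q v) := by
  rw [← (Fin.snocEquiv (fun _ => V)).sum_comp g]
  rw [Fintype.sum_prod_type]
  rw [Finset.sum_comm]
  rfl

lemma step_sum (f : ∀ t : ℕ, (Fin t → V) → V → ℝ) (k : ℕ) (H : (Fin (k+1) → V) → ℝ) :
    ∑ p : Fin (k+1) → V, mass f (k+1) p * H p
      = ∑ q : Fin k → V, ∑ v : V, mass f k q * f k q v * H (Fin.snoc q v) := by
  rw [sum_pi_succ]
  exact Finset.sum_congr rfl fun q _ => Finset.sum_congr rfl fun v _ => by rw [mass_snoc]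

lemma tower (f : ∀ t : ℕ, (Fin t → V) → V → ℝ) (hf : ∀ t q, ∑ v, f t q v = 1)
    (k : ℕ) : ∀ n, ∀ h : k ≤ n, ∀ g : (Fin k → V) → ℝ,
    ∑ y : Fin n → V, mass f n y * g (fun s : Fin k => y (Fin.castLE h s))
      = ∑ q : Fin k → V, mass f k q * g q := by
  intro n
  induction n with
  | zero => intro h g; interval_cases k; rfl
  | succ n ih =>
    intro h g
    rcases Nat.lt_or_ge k (n+1) with hlt | hge
    · have hk : k ≤ n := Nat.lt_succ_iff.mp hlt
      rw [step_sum f n (fun p => g (fun s : Fin k => p (Fin.castLE h s)))]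
      rw [← ih hk g]
      refine Finset.sum_congr rfl fun q _ => ?_
      have : ∀ v : V, (fun s : Fin k => (Fin.snoc q v : Fin (n+1) → V) (Fin.castLE h s))
          = (fun s : Fin k => q (Fin.castLE hk s)) := by
        intro v; funext s
        exact snoc_of_lt q v _ (s.2.trans_le hk)
      calc ∑ v, mass f n q * f n q v * g (fun s => (Fin.snoc q v : Fin (n+1) → V) (Fin.castLE h s))
          = ∑ v, mass f n q * f n q v * g (fun s => q (Fin.castLE hk s)) := by
            refine Finset.sum_congr rfl fun v _ => by rw [this v]
        _ = mass f n q * g (fun s => q (Fin.castLE hk s)) := by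
            rw [← Finset.sum_mul, ← Finset.mul_sum, hf n q, mul_one]
    · have hk : k = n + 1 := le_antisymm h hge
      subst hk
      rfl

lemma mass_total (f : ∀ t : ℕ, (Fin t → V) → V → ℝ) (hf : ∀ t q, ∑ v, f t q v = 1)
    (n : ℕ) : ∑ y : Fin n → V, mass f n y = 1 := by
  have := tower f hf 0 n (Nat.zero_le n) (fun _ => 1)
  simp only [mul_one] at this
  rw [this]
  rw [Finset.sum_eq_single_of_mem (Fin.elim0) (Finset.mem_univ _)]
  · simp [mass]
  · intro b _ hb; exact absurd (funext fun s => s.elim0) hb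

lemma mass_nonneg (f : ∀ t : ℕ, (Fin t → V) → V → ℝ) (hf : ∀ t q v, 0 ≤ f t q v)
    (k : ℕ) (p : Fin k → V) : 0 ≤ mass f k p :=
  Finset.prod_nonneg fun s _ => hf _ _ _

lemma mass_pos (f : ∀ t : ℕ, (Fin t → V) → V → ℝ) (hf : ∀ t q v, 0 < f t q v)
    (k : ℕ) (p : Fin k → V) : 0 < mass f k p :=
  Finset.prod_pos fun s _ => hf _ _ _

end AuxMass

section AuxAnalytic
variable {α : Type*} [Fintype α]

/-- Weak Pinsker: `tv² ≤ KL` for positive distributions (defs inlined). -/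
lemma tv_sq_le_kl (p q : α → ℝ) (hp : ∀ a, 0 < p a) (hq : ∀ a, 0 < q a)
    (hp1 : ∑ a, p a = 1) (hq1 : ∑ a, q a = 1) :
    ((∑ a, |p a - q a|) / 2) ^ 2 ≤ ∑ a, p a * Real.log (p a / q a) := by
  set t : ℝ := (∑ a, |p a - q a|) / 2 with ht
  have habs : ∀ a, 0 ≤ |p a - q a| := fun a => abs_nonneg _
  have ht0 : 0 ≤ t := by positivity
  -- pointwise bound
  have hpt : ∀ a, 2 * p a - 2 * Real.sqrt (p a * q a) ≤ p a * Real.log (p a / q a) := by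
    intro a
    have h1 : Real.log (Real.sqrt (q a / p a)) ≤ Real.sqrt (q a / p a) - 1 :=
      Real.log_le_sub_one_of_pos (Real.sqrt_pos.mpr (div_pos (hq a) (hp a)))
    have h2 : Real.log (Real.sqrt (q a / p a)) = (1/2) * Real.log (q a / p a) := by
      rw [Real.log_sqrt (div_pos (hq a) (hp a)).le]; ring
    have h3 : Real.log (q a / p a) = - Real.log (p a / q a) := by
      rw [← Real.log_inv]; congr 1; field_simp
    have h4 : p a * Real.sqrt (q a / p a) = Real.sqrt (p a * q a) := by
      rw [show p a * Real.sqrt (q a / p a) = Real.sqrt ((p a)^2) * Real.sqrt (q a / p a) by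
        rw [Real.sqrt_sq (hp a).le], ← Real.sqrt_mul (by positivity)]
      congr 1; field_simp [(hp a).ne']
    have h5 : p a * Real.log (Real.sqrt (q a / p a)) ≤ p a * (Real.sqrt (q a / p a) - 1) :=
      mul_le_mul_of_nonneg_left h1 (hp a).le
    rw [h2, h3] at h5
    nlinarith [h5, h4]
  -- sum bound on √(pq)
  have hmm : ∀ a, min (p a) (q a) * max (p a) (q a) = p a * q a := fun a => min_mul_max _ _
  have hS : ∑ a, Real.sqrt (p a * q a)
      ≤ Real.sqrt (∑ a, min (p a) (q a)) * Real.sqrt (∑ a, max (p a) (q a)) := by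
    calc ∑ a, Real.sqrt (p a * q a)
        = ∑ a, Real.sqrt (min (p a) (q a)) * Real.sqrt (max (p a) (q a)) := by
          refine Finset.sum_congr rfl fun a _ => ?_
          rw [← Real.sqrt_mul (le_min (hp a).le (hq a).le), hmm a]
      _ ≤ _ := Real.sum_sqrt_mul_sqrt_le _ (fun a => le_min (hp a).le (hq a).le)
          (fun a => le_max_of_le_left (hp a).le)
  have hsum2 : (∑ a, min (p a) (q a)) + (∑ a, max (p a) (q a)) = 2 := by
    rw [← Finset.sum_add_distrib]
    calc ∑ a, (min (p a) (q a) + max (p a) (q a)) = ∑ a, (p a + q a) := by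
          refine Finset.sum_congr rfl fun a _ => min_add_max _ _
      _ = 2 := by rw [Finset.sum_add_distrib, hp1, hq1]; norm_num
  have hsumd : (∑ a, max (p a) (q a)) - (∑ a, min (p a) (q a)) = 2 * t := by
    rw [← Finset.sum_sub_distrib]
    calc ∑ a, (max (p a) (q a) - min (p a) (q a)) = ∑ a, |p a - q a| := by
          refine Finset.sum_congr rfl fun a _ => (max_sub_min_eq_abs _ _).trans (abs_sub_comm _ _)
      _ = 2 * t := by rw [ht]; ring
  have hminnn : 0 ≤ ∑ a, min (p a) (q a) :=
    Finset.sum_nonneg fun a _ => le_min (hp a).le (hq a).le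
  have hmin : (∑ a, min (p a) (q a)) = 1 - t := by linarith
  have hmax : (∑ a, max (p a) (q a)) = 1 + t := by linarith
  have ht1 : t ≤ 1 := by linarith
  have hSb : ∑ a, Real.sqrt (p a * q a) ≤ 1 - t^2/2 := by
    have h6 : Real.sqrt (1 - t) * Real.sqrt (1 + t) = Real.sqrt ((1-t)*(1+t)) :=
      (Real.sqrt_mul (by linarith) _).symm
    have h7 : Real.sqrt ((1-t)*(1+t)) ≤ 1 - t^2/2 := by
      rw [show (1-t)*(1+t) = 1 - t^2 by ring]
      have : (1 : ℝ) - t^2 ≤ (1 - t^2/2)^2 := by nlinarith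
      calc Real.sqrt (1 - t^2) ≤ Real.sqrt ((1 - t^2/2)^2) := Real.sqrt_le_sqrt this
        _ = 1 - t^2/2 := Real.sqrt_sq (by nlinarith)
    rw [hmin, hmax] at hS
    linarith [hS, h6.symm.le]
  have hfin : 2 - 2 * (∑ a, Real.sqrt (p a * q a)) ≤ ∑ a, p a * Real.log (p a / q a) := by
    have := Finset.sum_le_sum (fun a (_ : a ∈ Finset.univ) => hpt a)
    rw [Finset.sum_sub_distrib, ← Finset.mul_sum, ← Finset.mul_sum, hp1] at this
    linarith
  nlinarith [hfin, hSb]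

lemma kl_nonneg' (p q : α → ℝ) (hp : ∀ a, 0 < p a) (hq : ∀ a, 0 < q a)
    (hp1 : ∑ a, p a = 1) (hq1 : ∑ a, q a = 1) :
    0 ≤ ∑ a, p a * Real.log (p a / q a) :=
  le_trans (by positivity) (tv_sq_le_kl p q hp hq hp1 hq1)

/-- `tv ≤ √KL`. -/
lemma tv_le_sqrt_kl (p q : α → ℝ) (hp : ∀ a, 0 < p a) (hq : ∀ a, 0 < q a)
    (hp1 : ∑ a, p a = 1) (hq1 : ∑ a, q a = 1) {B : ℝ}
    (hB : ∑ a, p a * Real.log (p a / q a) ≤ B) :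
    (∑ a, |p a - q a|) / 2 ≤ Real.sqrt B := by
  have h := (tv_sq_le_kl p q hp hq hp1 hq1).trans hB
  have h0 : (0:ℝ) ≤ (∑ a, |p a - q a|) / 2 := by positivity
  calc (∑ a, |p a - q a|) / 2 = Real.sqrt (((∑ a, |p a - q a|) / 2)^2) := (Real.sqrt_sq h0).symm
    _ ≤ Real.sqrt B := Real.sqrt_le_sqrt h

/-- Jensen-type: `∑ P x √(a x) ≤ √(∑ P x * a x)` when `P ≥ 0`, `∑ P = 1`, `a ≥ 0`. -/
lemma sum_mul_sqrt_le (P a : α → ℝ) (hP : ∀ x, 0 ≤ P x) (hP1 : ∑ x, P x = 1)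
    (ha : ∀ x, 0 ≤ a x) :
    ∑ x, P x * Real.sqrt (a x) ≤ Real.sqrt (∑ x, P x * a x) := by
  calc ∑ x, P x * Real.sqrt (a x)
      = ∑ x, Real.sqrt (P x) * Real.sqrt (P x * a x) := by
        refine Finset.sum_congr rfl fun x _ => ?_
        rw [Real.sqrt_mul (hP x), ← mul_assoc, Real.mul_self_sqrt (hP x)]
    _ ≤ Real.sqrt (∑ x, P x) * Real.sqrt (∑ x, P x * a x) :=
        Real.sum_sqrt_mul_sqrt_le _ hP (fun x => mul_nonneg (hP x) (ha x))
    _ = Real.sqrt (∑ x, P x * a x) := by rw [hP1, Real.sqrt_one, one_mul]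

lemma sum_sqrt_range_le (T : ℕ) :
    ∑ k ∈ Finset.range T, Real.sqrt k ≤ (2/3) * T * Real.sqrt T := by
  induction T with
  | zero => simp
  | succ n ih =>
    rw [Finset.sum_range_succ]
    have hn : Real.sqrt n ^ 2 = n := Real.sq_sqrt (Nat.cast_nonneg n)
    have hn1 : Real.sqrt (n+1) ^ 2 = n+1 := Real.sq_sqrt (by positivity)
    have h0 : (0:ℝ) ≤ Real.sqrt n := Real.sqrt_nonneg _
    have h1 : (0:ℝ) ≤ Real.sqrt (n+1) := Real.sqrt_nonneg _
    have key : (2/3) * n * Real.sqrt n + Real.sqrt n ≤ (2/3) * (n+1) * Real.sqrt (n+1) := by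
      nlinarith [sq_nonneg (Real.sqrt n - Real.sqrt (n+1)), sq_nonneg (Real.sqrt n + Real.sqrt (n+1)),
        mul_nonneg h0 h1, sq_nonneg (Real.sqrt n * Real.sqrt (n+1) - n)]
    have : ((n:ℝ)+1) = ((n+1 : ℕ):ℝ) := by push_cast; ring
    calc ∑ k ∈ Finset.range n, Real.sqrt k + Real.sqrt n
        ≤ (2/3) * n * Real.sqrt n + Real.sqrt n := by linarith
      _ ≤ (2/3) * (n+1) * Real.sqrt (n+1) := key
      _ = (2/3) * ((n+1:ℕ):ℝ) * Real.sqrt ((n+1:ℕ)) := by push_cast; ring_nf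
end AuxAnalytic

section AuxPolicy
open scoped Classical
variable {X V : Type*} [Fintype X] [Fintype V]

/-- The per-step kernel family of a policy at a fixed prompt. -/
noncomputable def F (π : Policy X V) (x : X) : ∀ t : ℕ, (Fin t → V) → V → ℝ :=
  fun t p v => π.prob t (x, p) v

lemma traj_eq_mass (π : Policy X V) (T : ℕ) (x : X) (y : Fin T → V) :
    traj π T x y = mass (F π x) T y := rfl

lemma visit_eq_mass (π : Policy X V) (P : X → ℝ) (k : ℕ) (c : X × (Fin k → V)) :
    visit π P k c = P c.1 * mass (F π c.1) k c.2 := rfl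

lemma F_sum_one (π : Policy X V) (x : X) : ∀ t q, ∑ v, F π x t q v = 1 :=
  fun t q => π.sum_one t (x, q)

lemma F_pos (π : Policy X V) (x : X) : ∀ t q v, 0 < F π x t q v :=
  fun t q v => π.pos t (x, q) v

/-- Chain-rule bound on prefix KL: `KL(mass roll k ‖ mass θ k) ≤ k δ`. -/
lemma kl_mass_le (πroll πθ : Policy X V) (x : X) (T : ℕ) (δ : ℝ)
    (hD : ∀ k : ℕ, k < T → ∀ c : X × (Fin k → V),
      klDiv (πroll.prob k c) (πθ.prob k c) ≤ δ) (hδ : 0 ≤ δ) :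
    ∀ k : ℕ, k ≤ T →
      klDiv (fun p => mass (F πroll x) k p) (fun p => mass (F πθ x) k p) ≤ k * δ := by
  intro k
  induction k with
  | zero =>
    intro _
    have h : ∀ p : Fin 0 → V, mass (F πroll x) 0 p = 1 := by
      intro p; rw [mass]; exact Finset.prod_of_isEmpty _
    have h2 : ∀ p : Fin 0 → V, mass (F πθ x) 0 p = 1 := by
      intro p; rw [mass]; exact Finset.prod_of_isEmpty _
    simp [klDiv, h, h2]
  | succ k ih =>
    intro hk1
    have hk : k ≤ T := Nat.le_of_succ_le hk1
    have hkT : k < T := hk1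
    rw [klDiv, sum_pi_succ]
    have hterm : ∀ (q : Fin k → V) (v : V),
        mass (F πroll x) (k+1) (Fin.snoc q v) *
          Real.log (mass (F πroll x) (k+1) (Fin.snoc q v) / mass (F πθ x) (k+1) (Fin.snoc q v))
        = mass (F πroll x) k q * F πroll x k q v *
            (Real.log (mass (F πroll x) k q / mass (F πθ x) k q)
              + Real.log (F πroll x k q v / F πθ x k q v)) := by
      intro q v
      rw [mass_snoc, mass_snoc]
      have h1 : (0:ℝ) < mass (F πroll x) k q := mass_pos _ (F_pos _ _) _ _
      have h2 : (0:ℝ) < mass (F πθ x) k q := mass_pos _ (F_pos _ _) _ _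
      have h3 : (0:ℝ) < F πroll x k q v := F_pos _ _ _ _ _
      have h4 : (0:ℝ) < F πθ x k q v := F_pos _ _ _ _ _
      rw [← div_mul_div_comm, Real.log_mul (by positivity) (by positivity)]
    calc ∑ q : Fin k → V, ∑ v : V,
          mass (F πroll x) (k+1) (Fin.snoc q v) *
            Real.log (mass (F πroll x) (k+1) (Fin.snoc q v) / mass (F πθ x) (k+1) (Fin.snoc q v))
        = ∑ q : Fin k → V,
            (mass (F πroll x) k q * Real.log (mass (F πroll x) k q / mass (F πθ x) k q)
              + mass (F πroll x) k q * klDiv (πroll.prob k (x, q)) (πθ.prob k (x, q))) := by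
          refine Finset.sum_congr rfl fun q _ => ?_
          rw [Finset.sum_congr rfl fun v _ => hterm q v]
          have e0 : ∀ v : V,
              mass (F πroll x) k q * F πroll x k q v *
                (Real.log (mass (F πroll x) k q / mass (F πθ x) k q)
                  + Real.log (F πroll x k q v / F πθ x k q v))
              = F πroll x k q v *
                  (mass (F πroll x) k q * Real.log (mass (F πroll x) k q / mass (F πθ x) k q))
                + mass (F πroll x) k q *
                  (F πroll x k q v * Real.log (F πroll x k q v / F πθ x k q v)) := by
            intro v; ring
          rw [Finset.sum_congr rfl fun v _ => e0 v, Finset.sum_add_distrib,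
            ← Finset.sum_mul, F_sum_one πroll x k q, one_mul, ← Finset.mul_sum]
          rfl
      _ ≤ k * δ + 1 * δ := by
          rw [Finset.sum_add_distrib]
          have hA : ∑ q : Fin k → V,
              mass (F πroll x) k q * Real.log (mass (F πroll x) k q / mass (F πθ x) k q)
              ≤ k * δ := ih hk
          have hB : ∑ q : Fin k → V,
              mass (F πroll x) k q * klDiv (πroll.prob k (x, q)) (πθ.prob k (x, q))
              ≤ 1 * δ := by
            calc ∑ q : Fin k → V,
                mass (F πroll x) k q * klDiv (πroll.prob k (x, q)) (πθ.prob k (x, q))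
                ≤ ∑ q : Fin k → V, mass (F πroll x) k q * δ := by
                  refine Finset.sum_le_sum fun q _ => ?_
                  exact mul_le_mul_of_nonneg_left (hD k hkT (x, q))
                    (mass_pos _ (F_pos _ _) _ _).le
              _ = 1 * δ := by rw [← Finset.sum_mul, mass_total _ (F_sum_one πroll x)]
          exact add_le_add hA hB
      _ = (k+1 : ℕ) * δ := by push_cast; ring

lemma mass_marginal (π : Policy X V) (x : X) {k T : ℕ} (h : k ≤ T) (p : Fin k → V) :
    mass (F π x) k p
      = ∑ y : Fin T → V, mass (F π x) T y *
          (if (fun s : Fin k => y (Fin.castLE h s)) = p then 1 else 0) := by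
  rw [tower (F π x) (F_sum_one π x) k T h (fun q => if q = p then 1 else 0)]
  rw [Finset.sum_congr rfl (fun q _ => mul_ite (q = p) (mass (F π x) k q) 1 0)]
  simp

lemma marginal_abs_le (πroll πθ : Policy X V) (x : X) {k T : ℕ} (h : k ≤ T) :
    ∑ p : Fin k → V, |mass (F πroll x) k p - mass (F πθ x) k p|
      ≤ ∑ y : Fin T → V, |mass (F πroll x) T y - mass (F πθ x) T y| := by
  calc ∑ p : Fin k → V, |mass (F πroll x) k p - mass (F πθ x) k p|
      = ∑ p : Fin k → V, |∑ y : Fin T → V,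
          (mass (F πroll x) T y - mass (F πθ x) T y) *
            (if (fun s : Fin k => y (Fin.castLE h s)) = p then 1 else 0)| := by
        refine Finset.sum_congr rfl fun p _ => ?_
        rw [mass_marginal πroll x h p, mass_marginal πθ x h p, ← Finset.sum_sub_distrib]
        congr 1
        exact Finset.sum_congr rfl fun y _ => by ring
    _ ≤ ∑ p : Fin k → V, ∑ y : Fin T → V,
          |mass (F πroll x) T y - mass (F πθ x) T y| *
            (if (fun s : Fin k => y (Fin.castLE h s)) = p then 1 else 0) := by
        refine Finset.sum_le_sum fun p _ => ?_
        refine (Finset.abs_sum_le_sum_abs _ _).trans ?_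
        refine Finset.sum_le_sum fun y _ => ?_
        rw [abs_mul]
        gcongr
        split <;> simp
    _ = ∑ y : Fin T → V, |mass (F πroll x) T y - mass (F πθ x) T y| := by
        rw [Finset.sum_comm]
        refine Finset.sum_congr rfl fun y _ => ?_
        rw [← Finset.mul_sum]
        rw [Finset.sum_ite_eq Finset.univ (fun s : Fin k => y (Fin.castLE h s)) (fun _ => (1:ℝ))]
        simp

lemma prod_threeway {T k : ℕ} (hk : k < T) (a b r : Fin T → ℝ) :
    (∏ t : Fin T, if t.1 < k then a t else if t.1 = k then b t else r t)
      = (∏ t : Fin T, if t.1 < k then a t else 1) * b ⟨k, hk⟩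
          * (∏ t : Fin T, if k < t.1 then r t else 1) := by
  have hb : b ⟨k, hk⟩ = ∏ t : Fin T, if t = ⟨k, hk⟩ then b t else 1 := by
    rw [Finset.prod_ite_eq' Finset.univ (⟨k, hk⟩ : Fin T) b]; simp
  rw [hb, ← Finset.prod_mul_distrib, ← Finset.prod_mul_distrib]
  refine Finset.prod_congr rfl fun t _ => ?_
  rcases lt_trichotomy t.1 k with h | h | h
  · rw [if_pos h, if_pos h, if_neg (by simp [Fin.ext_iff]; omega), if_neg (by omega)]; ring
  · rw [if_neg (by omega), if_pos h, if_neg (by omega), if_pos (by simp [Fin.ext_iff, h]),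
      if_neg (by omega)]; ring
  · rw [if_neg (by omega), if_neg (by omega), if_neg (by omega),
      if_neg (by simp [Fin.ext_iff]; omega), if_pos h]; ring

lemma prod_threeway' {T k : ℕ} (hk : k < T) (a : ∀ t : Fin T, t.1 < k → ℝ) (b r : Fin T → ℝ) :
    (∏ t : Fin T, if h : t.1 < k then a t h else if t.1 = k then b t else r t)
      = (∏ t : Fin T, if h : t.1 < k then a t h else 1) * b ⟨k, hk⟩
          * (∏ t : Fin T, if k < t.1 then r t else 1) := by
  have hb : b ⟨k, hk⟩ = ∏ t : Fin T, if t = ⟨k, hk⟩ then b t else 1 := by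
    rw [Finset.prod_ite_eq' Finset.univ (⟨k, hk⟩ : Fin T) b]; simp
  rw [hb, ← Finset.prod_mul_distrib, ← Finset.prod_mul_distrib]
  refine Finset.prod_congr rfl fun t _ => ?_
  rcases lt_trichotomy t.1 k with h | h | h
  · rw [dif_pos h, dif_pos h, if_neg (by simp [Fin.ext_iff]; omega), if_neg (by omega)]; ring
  · rw [dif_neg (by omega), dif_neg (by omega), if_pos h, if_pos (by simp [Fin.ext_iff, h]),
      if_neg (by omega)]; ring
  · rw [dif_neg (by omega), dif_neg (by omega), if_neg (by omega),
      if_neg (by simp [Fin.ext_iff]; omega), if_pos h]; ring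

lemma prod_lt_eq_mass (π : Policy X V) (x : X) {k T : ℕ} (hk : k ≤ T) (y : Fin T → V) :
    (∏ t : Fin T, if t.1 < k
        then π.prob t.1 (x, fun u : Fin t.1 => y (Fin.castLE t.isLt.le u)) (y t) else 1)
      = mass (F π x) k (fun s : Fin k => y (Fin.castLE hk s)) := by
  rw [← Finset.prod_filter]
  rw [mass]
  refine (Finset.prod_bij' (fun (s : Fin k) _ => Fin.castLE hk s)
    (fun (t : Fin T) ht => (⟨t.1, (Finset.mem_filter.mp ht).2⟩ : Fin k)) ?_ ?_ ?_ ?_ ?_).symm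
  · intro s _; exact Finset.mem_filter.mpr ⟨Finset.mem_univ _, s.2⟩
  · intro t _; exact Finset.mem_univ _
  · intro s _; rfl
  · intro t _; rfl
  · intro s _; rfl

variable {T : ℕ} {R : X → (Fin T → V) → ℝ}

lemma Qval_nonneg (hR : ∀ x y, R x y ∈ Set.Icc (0:ℝ) 1) (πroll : Policy X V)
    {k : ℕ} (hk : k < T) (c : X × (Fin k → V)) (v : V) :
    0 ≤ Qval T R πroll k hk c v := by
  unfold Qval
  refine Finset.sum_nonneg fun y _ => ?_
  split
  · refine mul_nonneg (Finset.prod_nonneg fun s _ => ?_) (hR c.1 y).1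
    split
    · exact (πroll.pos _ _ _).le
    · exact zero_le_one
  · exact le_refl 0

/-- The indicator-extended kernel family used for the normalization of `Q`. -/
noncomputable def fq (πroll : Policy X V) (k : ℕ) (c : X × (Fin k → V)) (v : V) :
    ∀ t : ℕ, (Fin t → V) → V → ℝ :=
  fun t p w =>
    if ht : t < k then (if w = c.2 ⟨t, ht⟩ then 1 else 0)
    else if t = k then (if w = v then 1 else 0)
    else πroll.prob t (c.1, p) w

lemma fq_sum_one (πroll : Policy X V) (k : ℕ) (c : X × (Fin k → V)) (v : V) :
    ∀ t q, ∑ w, fq πroll k c v t q w = 1 := by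
  intro t q
  unfold fq
  split
  · rw [Finset.sum_ite_eq' Finset.univ _ (fun _ => (1:ℝ))]; simp
  · split
    · rw [Finset.sum_ite_eq' Finset.univ _ (fun _ => (1:ℝ))]; simp
    · exact πroll.sum_one t (c.1, q)

lemma mass_fq (πroll : Policy X V) {k : ℕ} (hk : k < T) (c : X × (Fin k → V)) (v : V)
    (y : Fin T → V) :
    mass (fq πroll k c v) T y
      = if (∀ s : Fin k, y (Fin.castLE hk.le s) = c.2 s) ∧ y ⟨k, hk⟩ = v then
          (∏ s : Fin T, if k < s.1 then
            πroll.prob s.1 (c.1, fun u : Fin s.1 => y (Fin.castLE s.isLt.le u)) (y s)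
          else 1)
        else 0 := by
  have hmass : mass (fq πroll k c v) T y
      = ∏ t : Fin T, if ht : t.1 < k then (if y t = c.2 ⟨t.1, ht⟩ then 1 else 0)
          else if t.1 = k then (if y t = v then 1 else 0)
          else πroll.prob t.1 (c.1, fun u : Fin t.1 => y (Fin.castLE t.isLt.le u)) (y t) := by
    rw [mass]
    refine Finset.prod_congr rfl fun t _ => ?_
    unfold fq
    by_cases h1 : t.1 < k
    · rw [dif_pos h1]
    · rw [dif_neg h1]
  rw [hmass, prod_threeway' hk]
  by_cases hC : (∀ s : Fin k, y (Fin.castLE hk.le s) = c.2 s) ∧ y ⟨k, hk⟩ = v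
  · rw [if_pos hC]
    have h1 : (∏ t : Fin T, if ht : t.1 < k then (if y t = c.2 ⟨t.1, ht⟩ then 1 else 0)
        else (1:ℝ)) = 1 := by
      refine Finset.prod_eq_one fun t _ => ?_
      by_cases h : t.1 < k
      · rw [dif_pos h, if_pos]
        exact hC.1 ⟨t.1, h⟩
      · rw [dif_neg h]
    rw [h1, if_pos hC.2, one_mul, one_mul]
  · rw [if_neg hC]
    rw [not_and_or] at hC
    rcases hC with hC | hC
    · push_neg at hC
      obtain ⟨s, hs⟩ := hC
      have h1 : (∏ t : Fin T, if ht : t.1 < k then (if y t = c.2 ⟨t.1, ht⟩ then 1 else 0)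
          else (1:ℝ)) = 0 := by
        refine Finset.prod_eq_zero (Finset.mem_univ (Fin.castLE hk.le s)) ?_
        rw [dif_pos (show (Fin.castLE hk.le s).1 < k from s.2), if_neg]
        exact hs
      rw [h1, zero_mul, zero_mul]
    · rw [if_neg hC]
      ring

lemma Qval_le_one (hR : ∀ x y, R x y ∈ Set.Icc (0:ℝ) 1) (πroll : Policy X V)
    {k : ℕ} (hk : k < T) (c : X × (Fin k → V)) (v : V) :
    Qval T R πroll k hk c v ≤ 1 := by
  unfold Qval
  have h1 : ∑ y : Fin T → V, mass (fq πroll k c v) T y = 1 :=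
    mass_total _ (fq_sum_one πroll k c v) T
  refine le_trans (Finset.sum_le_sum fun y (_ : y ∈ Finset.univ) => ?_) h1.le
  rw [mass_fq πroll hk c v y]
  split
  · have hprod : (0:ℝ) ≤ ∏ s : Fin T, if k < s.1 then
        πroll.prob s.1 (c.1, fun u : Fin s.1 => y (Fin.castLE s.isLt.le u)) (y s) else 1 := by
      refine Finset.prod_nonneg fun s _ => ?_
      split
      · exact (πroll.pos _ _ _).le
      · exact zero_le_one
    have h2 := mul_le_mul_of_nonneg_left (hR c.1 y).2 hprod
    simpa using h2
  · exact le_refl (0:ℝ)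

lemma gval_eq_sub (πroll πθ : Policy X V) {k : ℕ} (hk : k < T) (c : X × (Fin k → V)) :
    gval T R πroll πθ k hk c
      = ∑ v, (πθ.prob k c v - πroll.prob k c v) * Qval T R πroll k hk c v := by
  unfold gval Aval Vval
  rw [Finset.sum_congr rfl fun v (_ : v ∈ Finset.univ) => mul_sub (πθ.prob k c v)
    (Qval T R πroll k hk c v) (∑ w, πroll.prob k c w * Qval T R πroll k hk c w)]
  rw [Finset.sum_sub_distrib, ← Finset.sum_mul, πθ.sum_one k c, one_mul]
  rw [Finset.sum_congr rfl fun v (_ : v ∈ Finset.univ) => sub_mul (πθ.prob k c v)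
    (πroll.prob k c v) (Qval T R πroll k hk c v)]
  rw [Finset.sum_sub_distrib]

lemma abs_gval_le (hR : ∀ x y, R x y ∈ Set.Icc (0:ℝ) 1) (πroll πθ : Policy X V)
    {k : ℕ} (hk : k < T) (c : X × (Fin k → V)) :
    |gval T R πroll πθ k hk c| ≤ (∑ v, |πroll.prob k c v - πθ.prob k c v|) / 2 := by
  have hzero : ∑ v, (πθ.prob k c v - πroll.prob k c v) = 0 := by
    rw [Finset.sum_sub_distrib, πθ.sum_one k c, πroll.sum_one k c, sub_self]
  have hhalf : gval T R πroll πθ k hk c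
      = ∑ v, (πθ.prob k c v - πroll.prob k c v) * (Qval T R πroll k hk c v - 1/2) := by
    rw [gval_eq_sub πroll πθ hk c]
    rw [Finset.sum_congr rfl fun v (_ : v ∈ Finset.univ) => mul_sub
      (πθ.prob k c v - πroll.prob k c v) (Qval T R πroll k hk c v) (1/2)]
    rw [Finset.sum_sub_distrib, ← Finset.sum_mul, hzero, zero_mul, sub_zero]
  rw [hhalf]
  refine (Finset.abs_sum_le_sum_abs _ _).trans ?_
  rw [Finset.sum_div]
  refine Finset.sum_le_sum fun v _ => ?_
  rw [abs_mul, abs_sub_comm (πroll.prob k c v) (πθ.prob k c v)]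
  have hQ1 : |Qval T R πroll k hk c v - 1/2| ≤ 1/2 := by
    rw [abs_le]
    constructor
    · linarith [Qval_nonneg hR πroll hk c v]
    · linarith [Qval_le_one hR πroll hk c v]
  calc |πθ.prob k c v - πroll.prob k c v| * |Qval T R πroll k hk c v - 1/2|
      ≤ |πθ.prob k c v - πroll.prob k c v| * (1/2) :=
        mul_le_mul_of_nonneg_left hQ1 (abs_nonneg _)
    _ = |πθ.prob k c v - πroll.prob k c v| / 2 := by ring

lemma key (P : X → ℝ) (πroll α β : Policy X V) {k : ℕ} (hk : k < T) :
    ∑ c : X × (Fin k → V), visit α P k c * ∑ v, β.prob k c v * Qval T R πroll k hk c v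
      = ∑ x, P x * ∑ y : Fin T → V,
          (∏ t : Fin T, if t.1 < k
              then α.prob t.1 (x, fun u : Fin t.1 => y (Fin.castLE t.isLt.le u)) (y t)
              else if t.1 = k
                then β.prob t.1 (x, fun u : Fin t.1 => y (Fin.castLE t.isLt.le u)) (y t)
                else πroll.prob t.1 (x, fun u : Fin t.1 => y (Fin.castLE t.isLt.le u)) (y t))
            * R x y := by
  rw [Fintype.sum_prod_type]
  refine Finset.sum_congr rfl fun x _ => ?_
  unfold Qval
  simp only [Finset.mul_sum, mul_ite, mul_zero]
  rw [Finset.sum_congr rfl fun p (_ : p ∈ Finset.univ) => Finset.sum_comm]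
  rw [Finset.sum_comm]
  refine Finset.sum_congr rfl fun y _ => ?_
  have hgen : ∀ W : (Fin k → V) → V → ℝ,
      (∑ p : Fin k → V, ∑ v : V,
        if (∀ s : Fin k, y (Fin.castLE hk.le s) = p s) ∧ y ⟨k, hk⟩ = v then W p v else 0)
      = W (fun s : Fin k => y (Fin.castLE hk.le s)) (y ⟨k, hk⟩) := by
    intro W
    have h1 : ∀ (p : Fin k → V) (v : V),
        (if (∀ s : Fin k, y (Fin.castLE hk.le s) = p s) ∧ y ⟨k, hk⟩ = v then W p v else 0)
        = if (fun s : Fin k => y (Fin.castLE hk.le s)) = p then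
            (if y ⟨k, hk⟩ = v then W p v else 0) else 0 := by
      intro p v
      by_cases hp : (fun s : Fin k => y (Fin.castLE hk.le s)) = p
      · by_cases hv : y ⟨k, hk⟩ = v
        · rw [if_pos ⟨fun s => congrFun hp s, hv⟩, if_pos hp, if_pos hv]
        · rw [if_neg (fun hC => hv hC.2), if_pos hp, if_neg hv]
      · rw [if_neg (fun hC => hp (funext hC.1)), if_neg hp]
    rw [Finset.sum_congr rfl fun p _ => Finset.sum_congr rfl fun v _ => h1 p v]
    have h2 : ∀ p : Fin k → V,
        (∑ v : V, if (fun s : Fin k => y (Fin.castLE hk.le s)) = p then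
          (if y ⟨k, hk⟩ = v then W p v else 0) else 0)
        = if (fun s : Fin k => y (Fin.castLE hk.le s)) = p then W p (y ⟨k, hk⟩) else 0 := by
      intro p
      by_cases hp : (fun s : Fin k => y (Fin.castLE hk.le s)) = p
      · simp only [if_pos hp]
        rw [Finset.sum_ite_eq Finset.univ (y ⟨k, hk⟩) (W p)]
        simp
      · simp only [if_neg hp, Finset.sum_const_zero]
    rw [Finset.sum_congr rfl fun p _ => h2 p]
    rw [Finset.sum_ite_eq Finset.univ (fun s : Fin k => y (Fin.castLE hk.le s))
      (fun p => W p (y ⟨k, hk⟩))]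
    simp
  rw [hgen]
  rw [prod_threeway hk, prod_lt_eq_mass α x hk.le y]
  rw [visit_eq_mass]
  ring

noncomputable def mix (πθ πroll : Policy X V) (m : ℕ) : Policy X V where
  prob := fun t c v => if t < m then πθ.prob t c v else πroll.prob t c v
  pos := fun t c v => by split; exacts [πθ.pos t c v, πroll.pos t c v]
  sum_one := fun t c => by
    split
    exacts [πθ.sum_one t c, πroll.sum_one t c]

lemma L1 (P : X → ℝ) (πroll πθ : Policy X V) {k : ℕ} (hk : k < T) :
    ∑ c : X × (Fin k → V), visit πθ P k c * Vval T R πroll k hk c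
      = Jval P T R (mix πθ πroll k) := by
  have h := key (R := R) P πroll πθ πroll hk
  rw [show (∑ c : X × (Fin k → V), visit πθ P k c * Vval T R πroll k hk c)
      = ∑ c : X × (Fin k → V), visit πθ P k c * ∑ v, πroll.prob k c v * Qval T R πroll k hk c v
    from rfl, h]
  simp only [Jval, traj, mix]
  refine Finset.sum_congr rfl fun x _ => ?_
  congr 1
  refine Finset.sum_congr rfl fun y _ => ?_
  congr 1
  refine Finset.prod_congr rfl fun t _ => ?_
  by_cases h1 : t.1 < k
  · rw [if_pos h1, if_pos h1]
  · rw [if_neg h1, if_neg h1, ite_self]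

lemma L2 (P : X → ℝ) (πroll πθ : Policy X V) {k : ℕ} (hk : k < T) :
    ∑ c : X × (Fin k → V), visit πθ P k c * ∑ v, πθ.prob k c v * Qval T R πroll k hk c v
      = Jval P T R (mix πθ πroll (k+1)) := by
  rw [key (R := R) P πroll πθ πθ hk]
  simp only [Jval, traj, mix]
  refine Finset.sum_congr rfl fun x _ => ?_
  congr 1
  refine Finset.sum_congr rfl fun y _ => ?_
  congr 1
  refine Finset.prod_congr rfl fun t _ => ?_
  by_cases h1 : t.1 < k
  · rw [if_pos h1, if_pos (by omega)]
  · by_cases h2 : t.1 = k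
    · rw [if_neg h1, if_pos h2, if_pos (by omega)]
    · rw [if_neg h1, if_neg h2, if_neg (by omega)]

lemma step_M (P : X → ℝ) (πroll πθ : Policy X V) {k : ℕ} (hk : k < T) :
    Jval P T R (mix πθ πroll (k+1)) - Jval P T R (mix πθ πroll k)
      = ∑ c : X × (Fin k → V), visit πθ P k c * gval T R πroll πθ k hk c := by
  rw [← L1 (R := R) P πroll πθ hk, ← L2 (R := R) P πroll πθ hk]
  rw [← Finset.sum_sub_distrib]
  refine Finset.sum_congr rfl fun c _ => ?_
  rw [← mul_sub]
  congr 1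
  unfold gval Aval
  rw [Finset.sum_congr rfl fun v (_ : v ∈ Finset.univ) => mul_sub (πθ.prob k c v)
    (Qval T R πroll k hk c v) (Vval T R πroll k hk c)]
  rw [Finset.sum_sub_distrib, ← Finset.sum_mul, πθ.sum_one k c, one_mul]

lemma mix_zero (P : X → ℝ) (πroll πθ : Policy X V) :
    Jval P T R (mix πθ πroll 0) = Jval P T R πroll := by
  simp [Jval, traj, mix]

lemma mix_top (P : X → ℝ) (πroll πθ : Policy X V) :
    Jval P T R (mix πθ πroll T) = Jval P T R πθ := by
  simp only [Jval, traj, mix]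
  refine Finset.sum_congr rfl fun x _ => ?_
  congr 1
  refine Finset.sum_congr rfl fun y _ => ?_
  congr 1
  exact Finset.prod_congr rfl fun t _ => if_pos t.2

lemma pdl (P : X → ℝ) (πroll πθ : Policy X V) :
    Jval P T R πθ - Jval P T R πroll
      = ∑ k : Fin T, ∑ c : X × (Fin k.1 → V),
          visit πθ P k.1 c * gval T R πroll πθ k.1 k.isLt c := by
  rw [Finset.sum_congr rfl fun (k : Fin T) (_ : k ∈ Finset.univ) =>
    (step_M (R := R) P πroll πθ k.isLt).symm]
  rw [Fin.sum_univ_eq_sum_range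
    (fun i => Jval P T R (mix πθ πroll (i+1)) - Jval P T R (mix πθ πroll i)) T]
  rw [Finset.sum_range_sub (fun i => Jval P T R (mix πθ πroll i)) T]
  rw [mix_zero (R := R) P πroll πθ, mix_top (R := R) P πroll πθ]

end AuxPolicy
end ProofAux

/-- **Monotonic improvement guarantee (Theorem 5.1, item 4)**: if rewards lie in `[0,1]`,
`δ > 0`, every token-level KL divergence `D_KL(π_roll(·|c) ‖ π_θ(·|c))` is at most `δ`
(i.e. `D_KL^tok,max ≤ δ`), and the surrogate satisfies
`L > min {(4/3)·T^(3/2)·δ, 2·T·√(δ · D_KL^seq)}`, then `J(π_θ) > J(π_roll)`. -/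
theorem monotonic_improvement
    {X V : Type*} [Fintype X] [Fintype V]
    (T : ℕ) (hT : 1 ≤ T)
    (P : X → ℝ) (hP0 : ∀ x, 0 ≤ P x) (hP1 : ∑ x, P x = 1)
    (R : X → (Fin T → V) → ℝ) (hR : ∀ x y, R x y ∈ Set.Icc (0:ℝ) 1)
    (πroll πθ : Policy X V)
    (δ : ℝ) (hδ : 0 < δ)
    (hD : ∀ k : ℕ, k < T → ∀ c : X × (Fin k → V),
      klDiv (πroll.prob k c) (πθ.prob k c) ≤ δ)
    (hL : surrogate P T R πroll πθ >
      min ((4 / 3) * (T : ℝ) ^ ((3 : ℝ) / 2) * δ)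
        (2 * T * Real.sqrt (δ * seqKL P T πroll πθ))) :
    Jval P T R πθ > Jval P T R πroll := by
  classical
  -- error decomposition
  have hE : Jval P T R πθ - Jval P T R πroll
      = surrogate P T R πroll πθ
        + ∑ k : Fin T, ∑ c : X × (Fin k.1 → V),
            (visit πθ P k.1 c - visit πroll P k.1 c) * gval T R πroll πθ k.1 k.isLt c := by
    rw [pdl (R := R) P πroll πθ]
    unfold surrogate
    rw [← Finset.sum_add_distrib]
    refine Finset.sum_congr rfl fun k _ => ?_
    rw [← Finset.sum_add_distrib]
    refine Finset.sum_congr rfl fun c _ => ?_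
    ring
  -- per-context gval bound
  have hg : ∀ (k : ℕ) (hk : k < T) (c : X × (Fin k → V)),
      |gval T R πroll πθ k hk c| ≤ Real.sqrt δ := by
    intro k hk c
    refine (abs_gval_le hR πroll πθ hk c).trans ?_
    exact tv_le_sqrt_kl _ _ (fun v => πroll.pos k c v) (fun v => πθ.pos k c v)
      (πroll.sum_one k c) (πθ.sum_one k c) (by simpa [klDiv] using hD k hk c)
  -- per-step error bound
  have hEk : ∀ (k : ℕ) (hk : k < T),
      |∑ c : X × (Fin k → V),
          (visit πθ P k c - visit πroll P k c) * gval T R πroll πθ k hk c|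
        ≤ Real.sqrt δ *
            ∑ x, P x * ∑ p : Fin k → V, |mass (F πroll x) k p - mass (F πθ x) k p| := by
    intro k hk
    have h1 : |∑ c : X × (Fin k → V),
        (visit πθ P k c - visit πroll P k c) * gval T R πroll πθ k hk c|
        ≤ ∑ c : X × (Fin k → V), |visit πθ P k c - visit πroll P k c| * Real.sqrt δ := by
      refine (Finset.abs_sum_le_sum_abs _ _).trans (Finset.sum_le_sum fun c _ => ?_)
      rw [abs_mul]
      exact mul_le_mul_of_nonneg_left (hg k hk c) (abs_nonneg _)
    have h2 : ∑ c : X × (Fin k → V), |visit πθ P k c - visit πroll P k c| * Real.sqrt δ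
        = Real.sqrt δ *
            ∑ x, P x * ∑ p : Fin k → V, |mass (F πroll x) k p - mass (F πθ x) k p| := by
      rw [← Finset.sum_mul, mul_comm]
      congr 1
      rw [Fintype.sum_prod_type]
      refine Finset.sum_congr rfl fun x _ => ?_
      rw [Finset.mul_sum]
      refine Finset.sum_congr rfl fun p _ => ?_
      rw [visit_eq_mass, visit_eq_mass]
      rw [show P (x, p).1 * mass (F πθ (x, p).1) k (x, p).2
          - P (x, p).1 * mass (F πroll (x, p).1) k (x, p).2
          = P x * (mass (F πθ x) k p - mass (F πroll x) k p) by ring]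
      rw [abs_mul, abs_of_nonneg (hP0 x), abs_sub_comm]
    exact h1.trans_eq h2
  -- two bounds on the visitation discrepancy
  have hDx1 : ∀ (k : ℕ) (hk : k < T),
      (∑ x, P x * ∑ p : Fin k → V, |mass (F πroll x) k p - mass (F πθ x) k p|)
        ≤ 2 * Real.sqrt (k * δ) := by
    intro k hk
    have hx : ∀ x : X,
        (∑ p : Fin k → V, |mass (F πroll x) k p - mass (F πθ x) k p|) ≤ 2 * Real.sqrt (k * δ) := by
      intro x
      have := tv_le_sqrt_kl (fun p => mass (F πroll x) k p) (fun p => mass (F πθ x) k p)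
        (fun p => mass_pos _ (F_pos _ _) _ _) (fun p => mass_pos _ (F_pos _ _) _ _)
        (mass_total _ (F_sum_one πroll x) k) (mass_total _ (F_sum_one πθ x) k)
        (B := k * δ) (by simpa [klDiv] using kl_mass_le πroll πθ x T δ hD hδ.le k hk.le)
      linarith
    calc (∑ x, P x * ∑ p : Fin k → V, |mass (F πroll x) k p - mass (F πθ x) k p|)
        ≤ ∑ x, P x * (2 * Real.sqrt (k * δ)) :=
          Finset.sum_le_sum fun x _ => mul_le_mul_of_nonneg_left (hx x) (hP0 x)
      _ = 2 * Real.sqrt (k * δ) := by rw [← Finset.sum_mul, hP1, one_mul]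
  have hDx2 : ∀ (k : ℕ) (hk : k < T),
      (∑ x, P x * ∑ p : Fin k → V, |mass (F πroll x) k p - mass (F πθ x) k p|)
        ≤ 2 * Real.sqrt (seqKL P T πroll πθ) := by
    intro k hk
    have hklx : ∀ x : X, 0 ≤ ∑ y : Fin T → V,
        mass (F πroll x) T y * Real.log (mass (F πroll x) T y / mass (F πθ x) T y) :=
      fun x => kl_nonneg' _ _ (fun p => mass_pos _ (F_pos _ _) _ _)
        (fun p => mass_pos _ (F_pos _ _) _ _)
        (mass_total _ (F_sum_one πroll x) T) (mass_total _ (F_sum_one πθ x) T)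
    have hx : ∀ x : X,
        (∑ p : Fin k → V, |mass (F πroll x) k p - mass (F πθ x) k p|)
          ≤ 2 * Real.sqrt (∑ y : Fin T → V,
              mass (F πroll x) T y * Real.log (mass (F πroll x) T y / mass (F πθ x) T y)) := by
      intro x
      refine (marginal_abs_le πroll πθ x hk.le).trans ?_
      have := tv_le_sqrt_kl (fun y => mass (F πroll x) T y) (fun y => mass (F πθ x) T y)
        (fun p => mass_pos _ (F_pos _ _) _ _) (fun p => mass_pos _ (F_pos _ _) _ _)
        (mass_total _ (F_sum_one πroll x) T) (mass_total _ (F_sum_one πθ x) T)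
        (B := ∑ y : Fin T → V,
          mass (F πroll x) T y * Real.log (mass (F πroll x) T y / mass (F πθ x) T y)) le_rfl
      linarith
    have hseq : seqKL P T πroll πθ = ∑ x, P x * ∑ y : Fin T → V,
        mass (F πroll x) T y * Real.log (mass (F πroll x) T y / mass (F πθ x) T y) := rfl
    calc (∑ x, P x * ∑ p : Fin k → V, |mass (F πroll x) k p - mass (F πθ x) k p|)
        ≤ ∑ x, P x * (2 * Real.sqrt (∑ y : Fin T → V,
            mass (F πroll x) T y * Real.log (mass (F πroll x) T y / mass (F πθ x) T y))) :=
          Finset.sum_le_sum fun x _ => mul_le_mul_of_nonneg_left (hx x) (hP0 x)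
      _ = 2 * ∑ x, P x * Real.sqrt (∑ y : Fin T → V,
            mass (F πroll x) T y * Real.log (mass (F πroll x) T y / mass (F πθ x) T y)) := by
          rw [Finset.mul_sum]; exact Finset.sum_congr rfl fun x _ => by ring
      _ ≤ 2 * Real.sqrt (∑ x, P x * ∑ y : Fin T → V,
            mass (F πroll x) T y * Real.log (mass (F πroll x) T y / mass (F πθ x) T y)) := by
          have := sum_mul_sqrt_le P _ hP0 hP1 hklx
          linarith
      _ = 2 * Real.sqrt (seqKL P T πroll πθ) := by rw [← hseq]
  -- combine
  set E := ∑ k : Fin T, ∑ c : X × (Fin k.1 → V),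
      (visit πθ P k.1 c - visit πroll P k.1 c) * gval T R πroll πθ k.1 k.isLt c with hEdef
  have hT0 : (0:ℝ) < T := by exact_mod_cast Nat.lt_of_lt_of_le Nat.zero_lt_one hT
  have habs1 : |E| ≤ (4 / 3) * (T : ℝ) ^ ((3 : ℝ) / 2) * δ := by
    have h1 : |E| ≤ ∑ k : Fin T, Real.sqrt δ * (2 * Real.sqrt (k.1 * δ)) := by
      refine (Finset.abs_sum_le_sum_abs _ _).trans (Finset.sum_le_sum fun k _ => ?_)
      refine (hEk k.1 k.isLt).trans ?_
      exact mul_le_mul_of_nonneg_left (hDx1 k.1 k.isLt) (Real.sqrt_nonneg δ)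
    have h2 : ∀ k : Fin T, Real.sqrt δ * (2 * Real.sqrt (k.1 * δ)) = 2 * δ * Real.sqrt k.1 := by
      intro k
      rw [Real.sqrt_mul (Nat.cast_nonneg k.1) δ]
      rw [show Real.sqrt δ * (2 * (Real.sqrt k.1 * Real.sqrt δ))
          = 2 * (Real.sqrt δ * Real.sqrt δ) * Real.sqrt k.1 by ring,
        Real.mul_self_sqrt hδ.le]
    have h3 : ∑ k : Fin T, Real.sqrt δ * (2 * Real.sqrt (k.1 * δ))
        = 2 * δ * ∑ k ∈ Finset.range T, Real.sqrt k := by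
      rw [Finset.sum_congr rfl fun k _ => h2 k, ← Finset.mul_sum]
      congr 1
      exact Fin.sum_univ_eq_sum_range (fun i => Real.sqrt i) T
    have h4 : (2:ℝ) * δ * ∑ k ∈ Finset.range T, Real.sqrt k
        ≤ 2 * δ * ((2/3) * T * Real.sqrt T) := by
      refine mul_le_mul_of_nonneg_left (sum_sqrt_range_le T) (by positivity)
    have h5 : (T:ℝ) ^ ((3:ℝ)/2) = T * Real.sqrt T := by
      rw [show (3:ℝ)/2 = 1 + 1/2 by norm_num, Real.rpow_add hT0, Real.rpow_one,
        Real.sqrt_eq_rpow]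
    rw [h5]
    calc |E| ≤ _ := h1
      _ = 2 * δ * ∑ k ∈ Finset.range T, Real.sqrt k := h3
      _ ≤ 2 * δ * ((2/3) * T * Real.sqrt T) := h4
      _ = 4 / 3 * ((T:ℝ) * Real.sqrt T) * δ := by ring
  have habs2 : |E| ≤ 2 * T * Real.sqrt (δ * seqKL P T πroll πθ) := by
    have h1 : |E| ≤ ∑ k : Fin T, Real.sqrt δ * (2 * Real.sqrt (seqKL P T πroll πθ)) := by
      refine (Finset.abs_sum_le_sum_abs _ _).trans (Finset.sum_le_sum fun k _ => ?_)
      refine (hEk k.1 k.isLt).trans ?_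
      exact mul_le_mul_of_nonneg_left (hDx2 k.1 k.isLt) (Real.sqrt_nonneg δ)
    have h2 : ∑ k : Fin T, Real.sqrt δ * (2 * Real.sqrt (seqKL P T πroll πθ))
        = 2 * T * (Real.sqrt δ * Real.sqrt (seqKL P T πroll πθ)) := by
      rw [Finset.sum_const, Finset.card_univ, Fintype.card_fin]
      simp [nsmul_eq_mul]; ring
    have h3 : Real.sqrt δ * Real.sqrt (seqKL P T πroll πθ)
        = Real.sqrt (δ * seqKL P T πroll πθ) := (Real.sqrt_mul hδ.le _).symm
    calc |E| ≤ _ := h1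
      _ = 2 * T * (Real.sqrt δ * Real.sqrt (seqKL P T πroll πθ)) := h2
      _ = 2 * T * Real.sqrt (δ * seqKL P T πroll πθ) := by rw [h3]
  have hmin : |E| ≤ min ((4 / 3) * (T : ℝ) ^ ((3 : ℝ) / 2) * δ)
      (2 * T * Real.sqrt (δ * seqKL P T πroll πθ)) := le_min habs1 habs2
  have hlow := (abs_le.mp hmin).1
  linarith [hL, hE]
end

section
/- No pure sequence-level KL bound exists (Proposition C.1, constructive form): for every ε > 0 there exist a horizon T ≥ 2, a finite vocabulary 𝒱, a finite prompt set 𝒳 with a probability distribution P, and strictly positive policies π_roll and π_θ such that D_KL^{seq} ≤ ε while D_KL^{tok,max} ≥ 1, where D_KL^{tok,max} = max over steps t and contexts c of D_KL(π_roll(·|c) ‖ π_θ(·|c)) and D_KL^{seq} = E_{x∼P}[ D_KL(P^{π_roll}(·|x) ‖ P^{π_θ}(·|x)) ]. In particular, there is no function f : ℝ → ℝ with f(x) → 0 as x → 0⁺ such that D_KL^{tok,max} ≤ f(D_KL^{seq}) holds for all such policy pairs. -/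
/-! Let `π_roll` sample every token uniformly from `Bool`, and let `π_θ` agree with it except on
one prompt `x₁`, where it samples every token independently from a skewed distribution `q` with
`κ = D_KL(uniform ‖ q) ≥ 1`. Independence makes the sequence-level divergence at `x₁` equal to `T κ`,
so `D_KL^seq = T κ P(x₁)` can be made arbitrarily small by shrinking `P(x₁)`, while the token-level
divergence at the first step of `x₁` stays `κ ≥ 1`. -/

open Finset

/-- A full configuration of the paper's setting: a horizon, a finite prompt set with a
probability distribution, a finite vocabulary, and a pair of strictly positive policies. -/
structure Config where
  T : ℕ
  hT : 1 ≤ T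
  X : Type
  V : Type
  [iX : Fintype X]
  [iV : Fintype V]
  P : X → ℝ
  hP0 : ∀ x, 0 ≤ P x
  hP1 : ∑ x, P x = 1
  πroll : Policy X V
  πθ : Policy X V

attribute [instance] Config.iX Config.iV

/-- The sequence-level KL divergence `D_KL^seq` of a configuration. -/
noncomputable def Config.seqKLval (cfg : Config) : ℝ :=
  seqKL cfg.P cfg.T cfg.πroll cfg.πθ

/-- `D_KL^tok,max ≤ a`: every token-level KL divergence
`D_KL(π_roll(·|c) ‖ π_θ(·|c))` over steps `t ≤ T` and contexts `c` is at most `a`. -/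
def Config.TokKLLe (cfg : Config) (a : ℝ) : Prop :=
  ∀ k : ℕ, k < cfg.T → ∀ c : cfg.X × (Fin k → cfg.V),
    klDiv (cfg.πroll.prob k c) (cfg.πθ.prob k c) ≤ a

/-- `a ≤ D_KL^tok,max`: some token-level KL divergence
`D_KL(π_roll(·|c) ‖ π_θ(·|c))` is at least `a`. -/
def Config.TokKLGe (cfg : Config) (a : ℝ) : Prop :=
  ∃ k : ℕ, k < cfg.T ∧ ∃ c : cfg.X × (Fin k → cfg.V),
    a ≤ klDiv (cfg.πroll.prob k c) (cfg.πθ.prob k c)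

section KLDiv

variable {α β : Type*} [Fintype α] [Fintype β]

lemma klDiv_self (p : α → ℝ) : klDiv p p = 0 := by
  refine Finset.sum_eq_zero fun a _ => ?_
  rcases eq_or_ne (p a) 0 with h | h <;> simp [h]

lemma klDiv_comp_equiv (e : β ≃ α) (p q : α → ℝ) : klDiv (p ∘ e) (q ∘ e) = klDiv p q :=
  e.sum_comp fun a => p a * Real.log (p a / q a)

lemma klDiv_prod_mul {p q : α → ℝ} {p' q' : β → ℝ} (hp : ∀ a, 0 < p a) (hq : ∀ a, 0 < q a)
    (hp' : ∀ b, 0 < p' b) (hq' : ∀ b, 0 < q' b) (hp1 : ∑ a, p a = 1) (hp'1 : ∑ b, p' b = 1) :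
    klDiv (fun z : α × β => p z.1 * p' z.2) (fun z => q z.1 * q' z.2)
      = klDiv p q + klDiv p' q' := by
  have hlog : ∀ a b, Real.log (p a * p' b / (q a * q' b))
      = Real.log (p a / q a) + Real.log (p' b / q' b) := fun a b => by
    rw [mul_div_mul_comm, Real.log_mul (div_pos (hp a) (hq a)).ne' (div_pos (hp' b) (hq' b)).ne']
  simp only [klDiv, Fintype.sum_prod_type, hlog, mul_add, Finset.sum_add_distrib]
  congr 1
  · refine Finset.sum_congr rfl fun a _ => ?_
    rw [← Finset.sum_mul, ← Finset.mul_sum, hp'1, mul_one]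
  · rw [Finset.sum_comm]
    refine Finset.sum_congr rfl fun b _ => ?_
    rw [← Finset.sum_mul, ← Finset.sum_mul, hp1, one_mul]

lemma klDiv_pi_fin {p q : α → ℝ} (hp : ∀ a, 0 < p a) (hq : ∀ a, 0 < q a) (hp1 : ∑ a, p a = 1)
    (n : ℕ) :
    klDiv (fun y : Fin n → α => ∏ i, p (y i)) (fun y => ∏ i, q (y i)) = n * klDiv p q := by
  induction n with
  | zero => simp [klDiv]
  | succ n ih =>
    have hprod : ∀ r : α → ℝ, (fun y : Fin (n + 1) → α => ∏ i, r (y i))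
        = (fun z : α × (Fin n → α) => r z.1 * ∏ i, r (z.2 i)) ∘ (Fin.consEquiv _).symm :=
      fun r => funext fun y => by simp [Fin.prod_univ_succ, Fin.consEquiv, Fin.tail]
    have hsum : ∑ y : Fin n → α, ∏ i, p (y i) = 1 := by
      rw [← Fintype.prod_sum (fun _ => p)]; simp [hp1]
    rw [hprod p, hprod q, klDiv_comp_equiv,
      klDiv_prod_mul hp hq (fun y => Finset.prod_pos fun i _ => hp (y i))
        (fun y => Finset.prod_pos fun i _ => hq (y i))
        hp1 hsum, ih]
    push_cast; ring

end KLDiv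

section PromptPolicy

variable {X V : Type*} [Fintype X] [Fintype V]

def Policy.ofPrompt (p : X → V → ℝ) (hp : ∀ x v, 0 < p x v) (hp1 : ∀ x, ∑ v, p x v = 1) :
    Policy X V where
  prob _ c := p c.1
  pos _ c := hp c.1
  sum_one _ c := hp1 c.1

lemma seqKL_ofPrompt (P : X → ℝ) (T : ℕ) {p q : X → V → ℝ} (hp : ∀ x v, 0 < p x v)
    (hq : ∀ x v, 0 < q x v) (hp1 : ∀ x, ∑ v, p x v = 1) (hq1 : ∀ x, ∑ v, q x v = 1) :
    seqKL P T (.ofPrompt p hp hp1) (.ofPrompt q hq hq1) = T * ∑ x, P x * klDiv (p x) (q x) := by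
  simp only [seqKL, traj, Policy.ofPrompt, klDiv_pi_fin (hp _) (hq _) (hp1 _), Finset.mul_sum]
  exact Finset.sum_congr rfl fun x _ => by ring

end PromptPolicy

section Construction

noncomputable def halfBool : Bool → ℝ := fun _ => 1 / 2

noncomputable def skewBool : Bool → ℝ := fun v => if v then 1 / 100 else 99 / 100

lemma halfBool_pos (v : Bool) : 0 < halfBool v := by norm_num [halfBool]

lemma skewBool_pos (v : Bool) : 0 < skewBool v := by cases v <;> norm_num [skewBool]

lemma one_le_klDiv_halfBool_skewBool : 1 ≤ klDiv halfBool skewBool := by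
  have hlog : klDiv halfBool skewBool = Real.log (2500 / 99) / 2 := by
    simp only [klDiv, Fintype.sum_bool, halfBool, skewBool, if_true, Bool.false_eq_true, if_false]
    rw [← mul_add, ← Real.log_mul (by norm_num) (by norm_num)]
    norm_num
    ring
  have h16 : Real.log 16 ≤ Real.log (2500 / 99) := Real.log_le_log (by norm_num) (by norm_num)
  have hlog16 : Real.log 16 = 4 * Real.log 2 := by
    rw [show (16 : ℝ) = 2 ^ 4 by norm_num, Real.log_pow]; norm_num
  linarith [Real.log_two_gt_d9]

noncomputable def halfPolicy : Policy Bool Bool :=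
  .ofPrompt (fun _ => halfBool) (fun _ => halfBool_pos) (fun _ => by simp [halfBool])

noncomputable def skewPolicy : Policy Bool Bool :=
  .ofPrompt (fun x => if x then skewBool else halfBool)
    (fun x => by cases x <;> simp [skewBool_pos, halfBool_pos])
    (fun x => by cases x <;> norm_num [halfBool, skewBool])

noncomputable def twoPromptConfig (d : ℝ) (hd0 : 0 ≤ d) (hd1 : d ≤ 1) : Config where
  T := 2
  hT := by norm_num
  X := Bool
  V := Bool
  P x := if x then d else 1 - d
  hP0 x := by cases x <;> simp [hd0, hd1]
  hP1 := by simp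
  πroll := halfPolicy
  πθ := skewPolicy

lemma seqKLval_twoPromptConfig (d : ℝ) (hd0 : 0 ≤ d) (hd1 : d ≤ 1) :
    (twoPromptConfig d hd0 hd1).seqKLval = 2 * d * klDiv halfBool skewBool := by
  change seqKL (fun x : Bool => if x then d else 1 - d) 2 halfPolicy skewPolicy = _
  rw [halfPolicy, skewPolicy, seqKL_ofPrompt]
  simp [klDiv_self]
  ring

lemma tokKLGe_twoPromptConfig (d : ℝ) (hd0 : 0 ≤ d) (hd1 : d ≤ 1) :
    (twoPromptConfig d hd0 hd1).TokKLGe 1 :=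
  ⟨0, two_pos, (true, Fin.elim0), one_le_klDiv_halfBool_skewBool⟩

lemma exists_config_seqKLval_mem_Ioo (ε : ℝ) (hε : 0 < ε) :
    ∃ cfg : Config, 2 ≤ cfg.T ∧ cfg.seqKLval ∈ Set.Ioo 0 ε ∧ cfg.TokKLGe 1 := by
  set κ := klDiv halfBool skewBool
  have hκ : 0 < κ := one_pos.trans_le one_le_klDiv_halfBool_skewBool
  -- with this weight on the skewed prompt, `D_KL^seq = 2κε / (2κ + ε) < ε`
  set d := ε / (2 * κ + ε)
  have hd0 : 0 < d := by positivity
  have hd1 : d < 1 := (div_lt_one (by positivity)).2 (by linarith)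
  refine ⟨twoPromptConfig d hd0.le hd1.le, le_rfl, ?_, tokKLGe_twoPromptConfig d hd0.le hd1.le⟩
  rw [seqKLval_twoPromptConfig]
  constructor
  · positivity
  · rw [show 2 * d * κ = ε * (2 * κ / (2 * κ + ε)) by ring]
    exact mul_lt_of_lt_one_right hε ((div_lt_one (by positivity)).2 (by linarith))

end Construction

/-- **No pure sequence-level KL bound exists (Proposition C.1, constructive form)**:
for every `ε > 0` there is a configuration (horizon `T ≥ 2`, finite vocabulary, finite
prompt set with a distribution, strictly positive policies) with `D_KL^seq ≤ ε` while
`D_KL^tok,max ≥ 1`. In particular, there is no function `f : ℝ → ℝ` with `f(x) → 0` as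
`x → 0⁺` such that `D_KL^tok,max ≤ f(D_KL^seq)` holds for all configurations. -/
theorem no_pure_seq_kl_bound :
    (∀ ε : ℝ, 0 < ε →
      ∃ cfg : Config, 2 ≤ cfg.T ∧ cfg.seqKLval ≤ ε ∧ cfg.TokKLGe 1) ∧
    ¬ ∃ f : ℝ → ℝ,
        Filter.Tendsto f (nhdsWithin 0 (Set.Ioi 0)) (nhds 0) ∧
        ∀ cfg : Config, cfg.TokKLLe (f cfg.seqKLval) := by
  refine ⟨fun ε hε => ?_, ?_⟩
  · obtain ⟨cfg, hT, hKL, htok⟩ := exists_config_seqKLval_mem_Ioo ε hε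
    exact ⟨cfg, hT, hKL.2.le, htok⟩
  · rintro ⟨f, hf, hbound⟩
    obtain ⟨u, hu, hsmall⟩ := mem_nhdsGT_iff_exists_Ioo_subset.1 (hf (Iio_mem_nhds one_pos))
    obtain ⟨cfg, -, hKL, k, hk, c, hc⟩ := exists_config_seqKLval_mem_Ioo u hu
    have hf1 : f cfg.seqKLval < 1 := hsmall hKL
    linarith [hbound cfg k hk c]
end
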